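/- arXiv:2401.13750 — 4 statements merged into one kernel-verified Lean document; each statement's English description precedes it below -/
import Mathlib

section
/- Let k, ℓ ≥ 1 be integers and n ≥ 1. The function σ₀(x,ξ) = |x|^{2k} + |ξ|^{2ℓ} on ℝⁿ × ℝⁿ is smooth, and for all multi-indices α, β there exists a constant C_{αβ} > 0 such that |∂_x^β ∂_ξ^α σ₀(x,ξ)| ≤ C_{αβ} (1 + |x|^k + |ξ|^ℓ)^{2 − |β|/k − |α|/ℓ} for all x, ξ ∈ ℝⁿ. That is, |x|^{2k} + |ξ|^{2ℓ} belongs to the anharmonic symbol class Σ²_{k,ℓ}. -/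
noncomputable section

/-- The coordinate direction in the phase space `ℝⁿ × ℝⁿ`: `Sum.inl j` is the `j`-th
`x`-direction, `Sum.inr j` is the `j`-th `ξ`-direction. -/
def phaseDir (n : ℕ) (i : Fin n ⊕ Fin n) :
    EuclideanSpace ℝ (Fin n) × EuclideanSpace ℝ (Fin n) :=
  match i with
  | Sum.inl j => (EuclideanSpace.single j (1 : ℝ), 0)
  | Sum.inr j => (0, EuclideanSpace.single j (1 : ℝ))

/-- Iterated coordinate partial derivatives of a function on phase space, taken along the
list of coordinate directions `L`; this realises `∂_x^β ∂_ξ^α` when `L` consists of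
`|β|` `x`-directions and `|α|` `ξ`-directions. -/
def pderivSeq (n : ℕ) : List (Fin n ⊕ Fin n) →
    ((EuclideanSpace ℝ (Fin n) × EuclideanSpace ℝ (Fin n)) → ℂ) →
    ((EuclideanSpace ℝ (Fin n) × EuclideanSpace ℝ (Fin n)) → ℂ)
  | [], f => f
  | (i :: L), f => fun p => fderiv ℝ (pderivSeq n L f) p (phaseDir n i)


variable {G H W W' : Type*} [NormedAddCommGroup G] [NormedSpace ℝ G]
  [NormedAddCommGroup H] [NormedSpace ℝ H]
  [NormedAddCommGroup W] [NormedSpace ℝ W]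
  [NormedAddCommGroup W'] [NormedSpace ℝ W']

/-- iterated directional derivative along a list of directions -/
def dseq : List G → (G → W) → (G → W)
  | [], f => f
  | (v :: L), f => fun x => fderiv ℝ (dseq L f) x v

lemma dseq_nil (f : G → W) : dseq [] f = f := rfl

lemma dseq_cons (v : G) (L : List G) (f : G → W) :
    dseq (v :: L) f = fun x => fderiv ℝ (dseq L f) x v := rfl

lemma dseq_append (L₁ L₂ : List G) (f : G → W) :
    dseq (L₁ ++ L₂) f = dseq L₁ (dseq L₂ f) := by
  induction L₁ with
  | nil => rfl
  | cons v L ih => simp [dseq, ih]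

lemma dseq_smooth {f : G → W} (hf : ContDiff ℝ (⊤ : ℕ∞) f) (L : List G) :
    ContDiff ℝ (⊤ : ℕ∞) (dseq L f) := by
  induction L with
  | nil => exact hf
  | cons v L ih =>
    exact (ih.fderiv_right (by simp)).clm_apply contDiff_const

lemma dseq_add {f g : G → W} (hf : ContDiff ℝ (⊤ : ℕ∞) f) (hg : ContDiff ℝ (⊤ : ℕ∞) g) (L : List G) :
    dseq L (fun x => f x + g x) = fun x => dseq L f x + dseq L g x := by
  induction L with
  | nil => rfl
  | cons v L ih =>
    funext x
    simp only [dseq, ih]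
    rw [fderiv_fun_add (((dseq_smooth hf L).differentiable (by simp)).differentiableAt)
      (((dseq_smooth hg L).differentiable (by simp)).differentiableAt)]
    rfl

lemma dseq_zero_mem {L : List G} (h : (0:G) ∈ L) (f : G → W) : dseq L f = fun _ => 0 := by
  induction L with
  | nil => simp at h
  | cons v L ih =>
    rcases List.mem_cons.1 h with h | h
    · funext x; simp [dseq, ← h]
    · funext x
      rw [dseq_cons, ih h]
      simp

lemma dseq_clm_comp (e : W →L[ℝ] W') {f : G → W} (hf : ContDiff ℝ (⊤ : ℕ∞) f) (L : List G) :
    dseq L (fun x => e (f x)) = fun x => e (dseq L f x) := by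
  induction L with
  | nil => rfl
  | cons v L ih =>
    funext x
    simp only [dseq, ih]
    rw [show (fun x => e (dseq L f x)) = (⇑e) ∘ (dseq L f) from rfl,
      fderiv_comp x e.differentiableAt
        (((dseq_smooth hf L).differentiable (by simp)).differentiableAt),
      e.fderiv]
    rfl

lemma dseq_comp_clm (T : G →L[ℝ] H) {f : H → W} (hf : ContDiff ℝ (⊤ : ℕ∞) f) (L : List G) :
    dseq L (fun y => f (T y)) = fun x => dseq (L.map T) f (T x) := by
  induction L with
  | nil => rfl
  | cons v L ih =>
    funext x
    simp only [dseq, ih, List.map_cons]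
    rw [show (fun x => dseq (L.map T) f (T x)) = (dseq (L.map T) f) ∘ (⇑T) from rfl,
      fderiv_comp x (((dseq_smooth hf (L.map T)).differentiable (by simp)).differentiableAt)
        T.differentiableAt, T.fderiv]
    rfl


abbrev Esp (n : ℕ) := EuclideanSpace ℝ (Fin n)

def sqn (n : ℕ) : Esp n → ℝ := fun x => ∑ j, x j ^ 2

lemma sqn_eq_norm_sq (n : ℕ) (x : Esp n) : sqn n x = ‖x‖ ^ 2 := by
  rw [EuclideanSpace.norm_eq, Real.sq_sqrt (by positivity)]
  simp [sqn, Real.norm_eq_abs, sq_abs]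

lemma sqn_smooth (n : ℕ) : ContDiff ℝ (⊤ : ℕ∞) (sqn n) := by
  apply ContDiff.sum
  intro i _
  exact ((EuclideanSpace.proj i (𝕜 := ℝ)).contDiff).pow 2

/-- the span of functions `(∑ xⱼ²)^a · ∏_{j∈m} xⱼ` with `2a + |m| ≤ d` -/
inductive Good (n : ℕ) : ℤ → ((Esp n) → ℝ) → Prop
  | zero (d) : Good n d (fun _ => 0)
  | add {d f g} : Good n d f → Good n d g → Good n d (fun x => f x + g x)
  | smul {d f} (c : ℝ) : Good n d f → Good n d (fun x => c * f x)
  | gen (a : ℕ) (m : List (Fin n)) :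
      Good n (2*a + m.length) (fun x => sqn n x ^ a * (m.map x).prod)
  | mono {d d' f} : Good n d f → d ≤ d' → Good n d' f

lemma Good.congr {n d} {f g : Esp n → ℝ} (h : Good n d f) (e : ∀ x, f x = g x) :
    Good n d g := (funext e : f = g) ▸ h

lemma mono_smooth (n : ℕ) (m : List (Fin n)) :
    ContDiff ℝ (⊤ : ℕ∞) (fun x : Esp n => (m.map x).prod) := by
  induction m with
  | nil => simpa using contDiff_const
  | cons j m ih =>
    simp only [List.map_cons, List.prod_cons]
    exact ((EuclideanSpace.proj j (𝕜 := ℝ)).contDiff).mul ih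

lemma Good.smooth {n d} {f : Esp n → ℝ} (h : Good n d f) : ContDiff ℝ (⊤ : ℕ∞) f := by
  induction h with
  | zero d => exact contDiff_const
  | add _ _ ih₁ ih₂ => exact ih₁.add ih₂
  | smul c _ ih => exact contDiff_const.mul ih
  | gen a m => exact ((sqn_smooth n).pow a).mul (mono_smooth n m)
  | mono _ _ ih => exact ih

lemma Good.eq_zero_of_neg {n d} {f : Esp n → ℝ} (h : Good n d f) (hd : d < 0) :
    ∀ x, f x = 0 := by
  induction h with
  | zero d => intro x; rfl
  | add _ _ ih₁ ih₂ => intro x; show _ + _ = 0; rw [ih₁ hd, ih₂ hd]; ring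
  | smul c _ ih => intro x; show _ * _ = 0; rw [ih hd]; ring
  | gen a m => exact absurd hd (not_lt.2 (by positivity))
  | mono _ hle ih => exact ih (lt_of_le_of_lt hle hd)

lemma abs_coord_le_norm {n : ℕ} (x : Esp n) (j : Fin n) : |x j| ≤ ‖x‖ := by
  have h1 : x j ^ 2 ≤ ‖x‖ ^ 2 := by
    rw [← sqn_eq_norm_sq]
    exact Finset.single_le_sum (f := fun i => x i ^ 2) (fun i _ => sq_nonneg _)
      (Finset.mem_univ j)
  calc |x j| = Real.sqrt (x j ^ 2) := (Real.sqrt_sq_eq_abs _).symm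
    _ ≤ Real.sqrt (‖x‖ ^ 2) := Real.sqrt_le_sqrt h1
    _ = ‖x‖ := by rw [Real.sqrt_sq (norm_nonneg _)]

lemma mono_bound {n : ℕ} (m : List (Fin n)) (x : Esp n) :
    |(m.map x).prod| ≤ ‖x‖ ^ m.length := by
  induction m with
  | nil => simp
  | cons j m ih =>
    have : |x j * (m.map x).prod| = |x j| * |(m.map x).prod| := abs_mul _ _
    simp only [List.map_cons, List.prod_cons, List.length_cons, this, pow_succ]
    rw [mul_comm (‖x‖ ^ m.length) ‖x‖]
    exact mul_le_mul (abs_coord_le_norm x j) ih (abs_nonneg _) (norm_nonneg _)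

lemma aux_smul_bound (c C t fx : ℝ) (hC : 0 < C) (ht : 0 ≤ t) (hb : |fx| ≤ C * t) :
    |c * fx| ≤ (|c| * C + 1) * t := by
  rw [abs_mul]
  nlinarith [abs_nonneg c, abs_nonneg fx]

lemma Good.bound {n d} {f : Esp n → ℝ} (h : Good n d f) :
    ∃ C : ℝ, 0 < C ∧ ∀ x, |f x| ≤ C * (1 + ‖x‖) ^ (d : ℝ) := by
  induction h with
  | zero d =>
    refine ⟨1, one_pos, fun x => ?_⟩
    simpa using Real.rpow_nonneg (show (0:ℝ) ≤ 1 + ‖x‖ by positivity) (d : ℝ)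
  | add _ _ ih₁ ih₂ =>
    obtain ⟨C₁, hC₁, h₁⟩ := ih₁
    obtain ⟨C₂, hC₂, h₂⟩ := ih₂
    refine ⟨C₁ + C₂, by positivity, fun x => ?_⟩
    calc |_| ≤ _ := abs_add_le _ _
      _ ≤ C₁ * (1 + ‖x‖) ^ (_ : ℝ) + C₂ * (1 + ‖x‖) ^ (_ : ℝ) := add_le_add (h₁ x) (h₂ x)
      _ = (C₁ + C₂) * (1 + ‖x‖) ^ (_ : ℝ) := by ring
  | smul c _ ih =>
    obtain ⟨C, hC, hb⟩ := ih
    exact ⟨|c| * C + 1, by positivity, fun x =>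
      aux_smul_bound c C _ _ hC (Real.rpow_nonneg (by positivity) _) (hb x)⟩
  | gen a m =>
    refine ⟨1, one_pos, fun x => ?_⟩
    have hx : (0:ℝ) ≤ ‖x‖ := norm_nonneg _
    have h0 : |sqn n x ^ a * (m.map x).prod| ≤ ‖x‖ ^ (2 * a + m.length) := by
      rw [abs_mul]
      have h1 : |sqn n x ^ a| = ‖x‖ ^ (2 * a) := by
        rw [sqn_eq_norm_sq, ← pow_mul, abs_of_nonneg (by positivity), mul_comm 2 a]
      rw [h1, pow_add]
      exact mul_le_mul_of_nonneg_left (mono_bound m x) (by positivity)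
    have h2 : ‖x‖ ^ (2 * a + m.length) ≤ (1 + ‖x‖) ^ (2 * a + m.length) :=
      pow_le_pow_left₀ hx (by linarith) _
    have h3 : ((1:ℝ) + ‖x‖) ^ (((2 * a + m.length : ℤ)) : ℝ) =
        (1 + ‖x‖) ^ (2 * a + m.length) := by
      rw [show (((2 * a + m.length : ℤ)) : ℝ) = ((2 * a + m.length : ℕ) : ℝ) by push_cast; ring,
        Real.rpow_natCast]
    rw [one_mul, h3]
    exact h0.trans h2
  | mono _ hle ih =>
    obtain ⟨C, hC, hb⟩ := ih
    refine ⟨C, hC, fun x => (hb x).trans ?_⟩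
    apply mul_le_mul_of_nonneg_left _ hC.le
    exact Real.rpow_le_rpow_of_exponent_le (by simp [norm_nonneg]) (by exact_mod_cast hle)


-- ### derivatives

def sqD {n : ℕ} (x : Esp n) : Esp n →L[ℝ] ℝ :=
  ∑ j, (2 * x j) • (EuclideanSpace.proj j (𝕜 := ℝ))

lemma hasFDerivAt_sqn {n : ℕ} (x : Esp n) : HasFDerivAt (sqn n) (sqD x) x := by
  have h : ∀ j ∈ Finset.univ, HasFDerivAt (fun y : Esp n => y j ^ 2)
      ((2 * x j) • (EuclideanSpace.proj j (𝕜 := ℝ))) x := by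
    intro j _
    have h1 : HasFDerivAt (fun y : Esp n => y j) (EuclideanSpace.proj j (𝕜 := ℝ)) x :=
      (EuclideanSpace.proj j (𝕜 := ℝ)).hasFDerivAt
    have h2 := (hasDerivAt_pow 2 (x j)).comp_hasFDerivAt x h1
    simpa [Function.comp_def, two_mul, mul_comm, mul_assoc, mul_left_comm] using h2
  exact HasFDerivAt.fun_sum h

lemma sqD_single {n : ℕ} (x : Esp n) (i : Fin n) :
    sqD x (EuclideanSpace.single i (1:ℝ)) = 2 * x i := by
  rw [sqD, ContinuousLinearMap.sum_apply]
  have : ∀ j, ((2 * x j) • (EuclideanSpace.proj j (𝕜 := ℝ)))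
      (EuclideanSpace.single i (1:ℝ)) = if j = i then 2 * x j else 0 := by
    intro j
    simp [EuclideanSpace.single_apply]
  simp only [this]
  simp

lemma Good.coordMul {n : ℕ} {d : ℤ} {f : Esp n → ℝ} (h : Good n d f) (j : Fin n) :
    Good n (d + 1) (fun x => x j * f x) := by
  induction h with
  | zero d => exact (Good.zero _).congr (fun x => by ring)
  | add hf hg ihf ihg => exact (ihf.add ihg).congr (fun x => by ring)
  | smul c _ ih => exact (ih.smul c).congr (fun x => by ring)
  | gen a m =>
    refine ((Good.gen a (j :: m)).congr (fun x => ?_)).mono (by simp [List.length_cons]; push_cast; linarith)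
    simp only [List.map_cons, List.prod_cons]
    ring
  | mono _ hle ih => exact ih.mono (by linarith)

lemma genD {n : ℕ} (a : ℕ) (m : List (Fin n)) (i : Fin n) :
    Good n (2 * a + m.length - 1)
      (fun x => fderiv ℝ (fun y => sqn n y ^ a * ((m.map y).prod)) x
        (EuclideanSpace.single i (1:ℝ))) := by
  induction m with
  | nil =>
    have hfun : (fun y : Esp n => sqn n y ^ a * ((List.nil.map y).prod))
        = fun y => sqn n y ^ a := by
      funext y; simp
    rw [hfun]
    cases a with
    | zero =>
      refine (Good.zero _).congr (fun x => ?_)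
      simp
    | succ b =>
      have hder : ∀ x : Esp n, HasFDerivAt (fun y : Esp n => sqn n y ^ (b+1))
          (((((b:ℝ)+1) * sqn n x ^ b)) • sqD x) x := by
        intro x
        have h2 := (hasDerivAt_pow (b+1) (sqn n x)).comp_hasFDerivAt x (hasFDerivAt_sqn x)
        simpa [Function.comp_def] using h2
      have hval : ∀ x : Esp n, fderiv ℝ (fun y : Esp n => sqn n y ^ (b+1)) x
          (EuclideanSpace.single i (1:ℝ)) = (2*((b:ℝ)+1)) * (sqn n x ^ b * x i) := by
        intro x
        rw [(hder x).fderiv]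
        rw [ContinuousLinearMap.smul_apply, sqD_single]
        simp only [smul_eq_mul]
        ring
      refine (((Good.gen b [i]).congr (fun x => by simp)).smul
        (2*((b:ℝ)+1))).mono (by simp; push_cast; linarith) |>.congr (fun x => (hval x).symm)
  | cons j m ih =>
    have hfun : (fun y : Esp n => sqn n y ^ a * (((j :: m).map y).prod))
        = fun y => y j * (sqn n y ^ a * ((m.map y).prod)) := by
      funext y
      simp only [List.map_cons, List.prod_cons]
      ring
    rw [hfun]
    have hw : ContDiff ℝ (⊤ : ℕ∞) (fun y : Esp n => sqn n y ^ a * ((m.map y).prod)) :=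
      (Good.gen a m).smooth
    have hval : ∀ x : Esp n,
        fderiv ℝ (fun y : Esp n => y j * (sqn n y ^ a * ((m.map y).prod))) x
          (EuclideanSpace.single i (1:ℝ))
        = x j * (fderiv ℝ (fun y : Esp n => sqn n y ^ a * ((m.map y).prod)) x
            (EuclideanSpace.single i (1:ℝ)))
          + (if j = i then 1 else 0) * (sqn n x ^ a * ((m.map x).prod)) := by
      intro x
      rw [fderiv_fun_mul (c := fun y : Esp n => y j) (by exact (EuclideanSpace.proj j (𝕜 := ℝ)).differentiableAt)
        ((hw.differentiable (by simp)).differentiableAt)]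
      rw [ContinuousLinearMap.add_apply, ContinuousLinearMap.smul_apply,
        ContinuousLinearMap.smul_apply]
      have hproj : fderiv ℝ (fun y : Esp n => y j) x = EuclideanSpace.proj j (𝕜 := ℝ) :=
        (EuclideanSpace.proj j (𝕜 := ℝ)).fderiv
      rw [hproj]
      have : (EuclideanSpace.proj j (𝕜 := ℝ)) (EuclideanSpace.single i (1:ℝ))
          = if j = i then 1 else 0 := by
        simp [EuclideanSpace.single_apply]
      rw [this]
      simp only [smul_eq_mul]
      ring
    have h1 : Good n (2 * a + (j :: m).length - 1)
        (fun x => x j * (fderiv ℝ (fun y : Esp n => sqn n y ^ a * ((m.map y).prod)) x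
            (EuclideanSpace.single i (1:ℝ)))) := by
      refine ((ih.coordMul j)).mono (by push_cast; simp)
    have h2 : Good n (2 * a + (j :: m).length - 1)
        (fun x => (if j = i then 1 else 0) * (sqn n x ^ a * ((m.map x).prod))) := by
      by_cases hji : j = i
      · simp only [hji, if_pos rfl]
        exact ((Good.gen a m).smul 1).mono (by push_cast; simp)
      · simp only [if_neg hji]
        exact (Good.zero _).congr (fun x => by ring)
    exact (h1.add h2).congr (fun x => (hval x).symm)

lemma Good.deriv {n : ℕ} {d : ℤ} {f : Esp n → ℝ} (h : Good n d f) (i : Fin n) :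
    Good n (d - 1) (fun x => fderiv ℝ f x (EuclideanSpace.single i (1:ℝ))) := by
  induction h with
  | zero d => exact (Good.zero _).congr (fun x => by simp)
  | add hf hg ihf ihg =>
    refine (ihf.add ihg).congr (fun x => ?_)
    rw [fderiv_fun_add ((hf.smooth.differentiable (by simp)).differentiableAt)
      ((hg.smooth.differentiable (by simp)).differentiableAt)]
    rfl
  | smul c hf ih =>
    refine (ih.smul c).congr (fun x => ?_)
    rw [fderiv_const_mul ((hf.smooth.differentiable (by simp)).differentiableAt) c]
    rfl
  | gen a m => exact genD a m i
  | mono _ hle ih => exact ih.mono (by linarith)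

lemma good_dseq {n : ℕ} {d : ℤ} {f : Esp n → ℝ} (h : Good n d f) (L : List (Fin n)) :
    Good n (d - L.length)
      (dseq (L.map (fun j => EuclideanSpace.single j (1:ℝ))) f) := by
  induction L with
  | nil => simpa [dseq_nil] using h
  | cons j L ih =>
    simp only [List.map_cons, dseq_cons]
    exact (ih.deriv j).mono (by simp [List.length_cons]; push_cast; linarith)


lemma one_add_pow_le (y : ℝ) (k : ℕ) (hy : 0 ≤ y) :
    (1 + y) ^ k ≤ 2 ^ k * (1 + y ^ k) := by
  have h1 : 1 + y ≤ 2 * max 1 y := by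
    rcases le_total y 1 with h | h
    · rw [max_eq_left h]; linarith
    · rw [max_eq_right h]; linarith
  calc (1 + y) ^ k ≤ (2 * max 1 y) ^ k :=
        pow_le_pow_left₀ (by linarith) h1 k
    _ = 2 ^ k * (max 1 y) ^ k := mul_pow 2 _ k
    _ ≤ 2 ^ k * (1 + y ^ k) := by
        apply mul_le_mul_of_nonneg_left _ (by positivity)
        rcases le_total y 1 with h | h
        · rw [max_eq_left h]
          simp
          positivity
        · rw [max_eq_right h]
          nlinarith [pow_nonneg (by linarith : (0:ℝ) ≤ y) k]

lemma growth_key (k b : ℕ) (hk : 1 ≤ k) (y A : ℝ) (hy : 0 ≤ y) (hA : 1 + y ^ k ≤ A)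
    (hd : (0:ℤ) ≤ 2 * k - b) :
    (1 + y) ^ (((2 * (k:ℤ) - b : ℤ)) : ℝ) ≤ 4 ^ k * A ^ ((2:ℝ) - (b:ℝ) / (k:ℝ)) := by
  have hk0 : (0:ℝ) < k := by exact_mod_cast hk
  have hA1 : (1:ℝ) ≤ A := le_trans (by nlinarith [pow_nonneg hy k]) hA
  have hB1 : (1:ℝ) ≤ 1 + y := by linarith
  set d : ℝ := ((2 * (k:ℤ) - b : ℤ) : ℝ) with hdd
  have hd0 : 0 ≤ d := by rw [hdd]; exact_mod_cast hd
  have hdk : d / k = (2:ℝ) - (b:ℝ) / (k:ℝ) := by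
    rw [hdd]
    push_cast
    field_simp
  have hdk2 : d / k ≤ 2 := by
    rw [hdk]
    have : 0 ≤ (b:ℝ) / k := by positivity
    linarith
  have step1 : (1 + y) ^ d = ((1 + y) ^ (k:ℕ)) ^ (d / k) := by
    rw [← Real.rpow_natCast (1 + y) k, ← Real.rpow_mul (by linarith)]
    congr 1
    field_simp
  have step2 : ((1 + y) ^ (k:ℕ)) ^ (d / k) ≤ (2 ^ k * A) ^ (d / k) := by
    apply Real.rpow_le_rpow (by positivity)
      (le_trans (one_add_pow_le y k hy) (by nlinarith [pow_pos (show (0:ℝ) < 2 by norm_num) k]))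
      (by positivity)
  have step3 : ((2:ℝ) ^ k * A) ^ (d / k) = ((2:ℝ) ^ k) ^ (d / k) * A ^ (d / k) :=
    Real.mul_rpow (by positivity) (by linarith)
  have step4 : ((2:ℝ) ^ k) ^ (d / k) ≤ ((2:ℝ) ^ k) ^ (2:ℝ) :=
    Real.rpow_le_rpow_of_exponent_le (one_le_pow₀ one_le_two) hdk2
  have step5 : ((2:ℝ) ^ k) ^ (2:ℝ) = 4 ^ k := by
    rw [← Real.rpow_natCast 2 k, ← Real.rpow_mul (by norm_num), mul_comm,
      Real.rpow_mul (by norm_num), Real.rpow_natCast]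
    norm_num
  have hAd : A ^ (d / k) ≤ A ^ ((2:ℝ) - (b:ℝ) / (k:ℝ)) := le_of_eq (by rw [hdk])
  calc (1 + y) ^ d = ((1 + y) ^ (k:ℕ)) ^ (d / k) := step1
    _ ≤ (2 ^ k * A) ^ (d / k) := step2
    _ = ((2:ℝ) ^ k) ^ (d / k) * A ^ (d / k) := step3
    _ ≤ 4 ^ k * A ^ ((2:ℝ) - (b:ℝ) / (k:ℝ)) := by
        rw [← step5]
        exact mul_le_mul step4 hAd (Real.rpow_nonneg (by linarith) _) (by positivity)


lemma pderivSeq_eq_dseq (n : ℕ) (L : List (Fin n ⊕ Fin n))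
    (f : (Esp n × Esp n) → ℂ) :
    pderivSeq n L f = dseq (L.map (phaseDir n)) f := by
  induction L with
  | nil => rfl
  | cons i L ih => funext p; simp only [pderivSeq, List.map_cons, dseq_cons, ih]


/-- `σ₀(x,ξ) = |x|^{2k} + |ξ|^{2ℓ}` is smooth and belongs to the anharmonic symbol class
`Σ²_{k,ℓ}`: each mixed coordinate derivative `∂_x^β ∂_ξ^α σ₀` (here realised by taking
`|β|` partial derivatives in the `x`-variables and `|α|` in the `ξ`-variables) is bounded
by `C_{αβ} (1 + |x|^k + |ξ|^ℓ)^{2 - |β|/k - |α|/ℓ}`. -/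
theorem anharmonic_symbol_in_class (k l n : ℕ) (hk : 1 ≤ k) (hl : 1 ≤ l) (hn : 1 ≤ n) :
    ContDiff ℝ (⊤ : ℕ∞) (fun p : EuclideanSpace ℝ (Fin n) × EuclideanSpace ℝ (Fin n) =>
        ((‖p.1‖ ^ (2 * k) + ‖p.2‖ ^ (2 * l) : ℝ) : ℂ)) ∧
    ∀ (β α : List (Fin n)), ∃ C : ℝ, 0 < C ∧
      ∀ x ξ : EuclideanSpace ℝ (Fin n),
        ‖pderivSeq n (β.map Sum.inl ++ α.map Sum.inr)
            (fun p => ((‖p.1‖ ^ (2 * k) + ‖p.2‖ ^ (2 * l) : ℝ) : ℂ)) (x, ξ)‖ ≤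
          C * (1 + ‖x‖ ^ k + ‖ξ‖ ^ l) ^
            ((2 : ℝ) - (β.length : ℝ) / k - (α.length : ℝ) / l) := by
  have hg : ContDiff ℝ (⊤ : ℕ∞) (fun y : Esp n => sqn n y ^ k) := (sqn_smooth n).pow k
  have hh : ContDiff ℝ (⊤ : ℕ∞) (fun y : Esp n => sqn n y ^ l) := (sqn_smooth n).pow l
  have hu : ContDiff ℝ (⊤ : ℕ∞) (fun p : Esp n × Esp n => sqn n p.1 ^ k) := hg.comp contDiff_fst
  have hv : ContDiff ℝ (⊤ : ℕ∞) (fun p : Esp n × Esp n => sqn n p.2 ^ l) := hh.comp contDiff_snd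
  have hF : ContDiff ℝ (⊤ : ℕ∞) (fun p : Esp n × Esp n => sqn n p.1 ^ k + sqn n p.2 ^ l) := hu.add hv
  have hfun : (fun p : EuclideanSpace ℝ (Fin n) × EuclideanSpace ℝ (Fin n) =>
        ((‖p.1‖ ^ (2 * k) + ‖p.2‖ ^ (2 * l) : ℝ) : ℂ))
      = fun p : Esp n × Esp n => Complex.ofRealCLM (sqn n p.1 ^ k + sqn n p.2 ^ l) := by
    funext p
    rw [Complex.ofRealCLM_apply]
    norm_cast
    rw [pow_mul, pow_mul, ← sqn_eq_norm_sq, ← sqn_eq_norm_sq]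
  constructor
  · rw [hfun]
    exact Complex.ofRealCLM.contDiff.comp hF
  · intro β α
    have Gg : Good n (2 * k) (fun y : Esp n => sqn n y ^ k) := by
      have := Good.gen (n := n) k []
      simpa using this
    have Gh : Good n (2 * l) (fun y : Esp n => sqn n y ^ l) := by
      have := Good.gen (n := n) l []
      simpa using this
    have Gβ := good_dseq Gg β
    have Gα := good_dseq Gh α
    obtain ⟨C₁, hC₁, hB₁⟩ := Gβ.bound
    obtain ⟨C₂, hC₂, hB₂⟩ := Gα.bound
    refine ⟨C₁ * 4 ^ k + C₂ * 4 ^ l, by positivity, fun x ξ => ?_⟩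
    have hxk : (0:ℝ) ≤ ‖x‖ ^ k := pow_nonneg (norm_nonneg x) k
    have hξl : (0:ℝ) ≤ ‖ξ‖ ^ l := pow_nonneg (norm_nonneg ξ) l
    have hA1 : (1:ℝ) ≤ 1 + ‖x‖ ^ k + ‖ξ‖ ^ l := by linarith
    have hApos : (0:ℝ) <
        (1 + ‖x‖ ^ k + ‖ξ‖ ^ l) ^ ((2:ℝ) - (β.length : ℝ) / k - (α.length : ℝ) / l) :=
      Real.rpow_pos_of_pos (by linarith) _
    rw [hfun, pderivSeq_eq_dseq]
    have hmap : ((β.map Sum.inl ++ α.map Sum.inr).map (phaseDir n))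
        = β.map (fun j => ((EuclideanSpace.single j (1:ℝ) : Esp n), (0:Esp n)))
          ++ α.map (fun j => ((0:Esp n), (EuclideanSpace.single j (1:ℝ) : Esp n))) := by
      rw [List.map_append, List.map_map, List.map_map]; rfl
    rw [hmap]
    set LL := (β.map fun j => ((EuclideanSpace.single j (1:ℝ) : Esp n), (0:Esp n)))
      ++ (α.map fun j => ((0:Esp n), (EuclideanSpace.single j (1:ℝ) : Esp n))) with hLL
    rw [dseq_clm_comp Complex.ofRealCLM hF LL]
    simp only [Complex.ofRealCLM_apply, Complex.norm_real, Real.norm_eq_abs]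
    have hsplit : dseq LL (fun p : Esp n × Esp n => sqn n p.1 ^ k + sqn n p.2 ^ l)
        = fun p => dseq LL (fun p : Esp n × Esp n => sqn n p.1 ^ k) p
            + dseq LL (fun p : Esp n × Esp n => sqn n p.2 ^ l) p := dseq_add hu hv LL
    have huse : dseq LL (fun p : Esp n × Esp n => sqn n p.1 ^ k)
        = fun p : Esp n × Esp n =>
          dseq (LL.map Prod.fst) (fun y : Esp n => sqn n y ^ k) p.1 := by
      exact dseq_comp_clm (ContinuousLinearMap.fst ℝ (Esp n) (Esp n)) hg LL
    have hvse : dseq LL (fun p : Esp n × Esp n => sqn n p.2 ^ l)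
        = fun p : Esp n × Esp n =>
          dseq (LL.map Prod.snd) (fun y : Esp n => sqn n y ^ l) p.2 := by
      exact dseq_comp_clm (ContinuousLinearMap.snd ℝ (Esp n) (Esp n)) hh LL
    have hmapfst : LL.map Prod.fst
        = β.map (fun j => (EuclideanSpace.single j (1:ℝ) : Esp n))
          ++ α.map (fun _ => (0 : Esp n)) := by
      rw [hLL, List.map_append, List.map_map, List.map_map]; rfl
    have hmapsnd : LL.map Prod.snd
        = β.map (fun _ => (0 : Esp n))
          ++ α.map (fun j => (EuclideanSpace.single j (1:ℝ) : Esp n)) := by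
      rw [hLL, List.map_append, List.map_map, List.map_map]; rfl
    rw [hsplit]
    simp only [huse, hvse]
    -- bound the x-part
    have hXbound : |dseq (LL.map Prod.fst) (fun y : Esp n => sqn n y ^ k) x|
        ≤ (C₁ * 4 ^ k) *
          (1 + ‖x‖ ^ k + ‖ξ‖ ^ l) ^ ((2:ℝ) - (β.length : ℝ) / k - (α.length : ℝ) / l) := by
      by_cases hα : α = []
      · subst hα
        have hmap' : LL.map Prod.fst = β.map (fun j => (EuclideanSpace.single j (1:ℝ) : Esp n)) := by
          rw [hmapfst]; simp
        rw [hmap']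
        have hexp : ((2:ℝ) - (β.length : ℝ) / k - ((List.length ([] : List (Fin n))) : ℝ) / l)
            = (2:ℝ) - (β.length : ℝ) / k := by simp
        rw [hexp]
        by_cases hneg : (2 * (k:ℤ) - β.length) < 0
        · have h0 := Gβ.eq_zero_of_neg hneg x
          rw [h0]
          have : (0:ℝ) < (C₁ * 4 ^ k) *
              (1 + ‖x‖ ^ k + ‖ξ‖ ^ l) ^ ((2:ℝ) - (β.length : ℝ) / k) :=
            mul_pos (by positivity) (Real.rpow_pos_of_pos (by linarith) _)
          simpa using this.le
        · push_neg at hneg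
          have hgr := growth_key k β.length hk ‖x‖ (1 + ‖x‖ ^ k + ‖ξ‖ ^ l)
            (norm_nonneg x) (by linarith) hneg
          calc |dseq (β.map fun j => (EuclideanSpace.single j (1:ℝ) : Esp n))
                (fun y : Esp n => sqn n y ^ k) x|
              ≤ C₁ * (1 + ‖x‖) ^ (((2 * (k:ℤ) - β.length : ℤ)) : ℝ) := hB₁ x
            _ ≤ C₁ * (4 ^ k * (1 + ‖x‖ ^ k + ‖ξ‖ ^ l) ^ ((2:ℝ) - (β.length : ℝ) / k)) :=
                mul_le_mul_of_nonneg_left hgr hC₁.le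
            _ = (C₁ * 4 ^ k) * (1 + ‖x‖ ^ k + ‖ξ‖ ^ l) ^ ((2:ℝ) - (β.length : ℝ) / k) := by
                ring
      · obtain ⟨j, hj⟩ := List.exists_mem_of_ne_nil α hα
        have h0 : (0 : Esp n) ∈ LL.map Prod.fst := by
          rw [hmapfst]
          exact List.mem_append_right _ (List.mem_map.2 ⟨j, hj, rfl⟩)
        rw [dseq_zero_mem h0]
        have : (0:ℝ) < (C₁ * 4 ^ k) *
            (1 + ‖x‖ ^ k + ‖ξ‖ ^ l) ^ ((2:ℝ) - (β.length : ℝ) / k - (α.length : ℝ) / l) :=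
          mul_pos (by positivity) hApos
        simpa using this.le
    -- bound the ξ-part
    have hYbound : |dseq (LL.map Prod.snd) (fun y : Esp n => sqn n y ^ l) ξ|
        ≤ (C₂ * 4 ^ l) *
          (1 + ‖x‖ ^ k + ‖ξ‖ ^ l) ^ ((2:ℝ) - (β.length : ℝ) / k - (α.length : ℝ) / l) := by
      by_cases hβ : β = []
      · subst hβ
        have hmap' : LL.map Prod.snd = α.map (fun j => (EuclideanSpace.single j (1:ℝ) : Esp n)) := by
          rw [hmapsnd]; simp
        rw [hmap']
        have hexp : ((2:ℝ) - ((List.length ([] : List (Fin n))) : ℝ) / k - (α.length : ℝ) / l)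
            = (2:ℝ) - (α.length : ℝ) / l := by simp
        rw [hexp]
        by_cases hneg : (2 * (l:ℤ) - α.length) < 0
        · have h0 := Gα.eq_zero_of_neg hneg ξ
          rw [h0]
          have : (0:ℝ) < (C₂ * 4 ^ l) *
              (1 + ‖x‖ ^ k + ‖ξ‖ ^ l) ^ ((2:ℝ) - (α.length : ℝ) / l) :=
            mul_pos (by positivity) (Real.rpow_pos_of_pos (by linarith) _)
          simpa using this.le
        · push_neg at hneg
          have hgr := growth_key l α.length hl ‖ξ‖ (1 + ‖x‖ ^ k + ‖ξ‖ ^ l)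
            (norm_nonneg ξ) (by linarith) hneg
          calc |dseq (α.map fun j => (EuclideanSpace.single j (1:ℝ) : Esp n))
                (fun y : Esp n => sqn n y ^ l) ξ|
              ≤ C₂ * (1 + ‖ξ‖) ^ (((2 * (l:ℤ) - α.length : ℤ)) : ℝ) := hB₂ ξ
            _ ≤ C₂ * (4 ^ l * (1 + ‖x‖ ^ k + ‖ξ‖ ^ l) ^ ((2:ℝ) - (α.length : ℝ) / l)) :=
                mul_le_mul_of_nonneg_left hgr hC₂.le
            _ = (C₂ * 4 ^ l) * (1 + ‖x‖ ^ k + ‖ξ‖ ^ l) ^ ((2:ℝ) - (α.length : ℝ) / l) := by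
                ring
      · obtain ⟨j, hj⟩ := List.exists_mem_of_ne_nil β hβ
        have h0 : (0 : Esp n) ∈ LL.map Prod.snd := by
          rw [hmapsnd]
          exact List.mem_append_left _ (List.mem_map.2 ⟨j, hj, rfl⟩)
        rw [dseq_zero_mem h0]
        have : (0:ℝ) < (C₂ * 4 ^ l) *
            (1 + ‖x‖ ^ k + ‖ξ‖ ^ l) ^ ((2:ℝ) - (β.length : ℝ) / k - (α.length : ℝ) / l) :=
          mul_pos (by positivity) hApos
        simpa using this.le
    calc |dseq (LL.map Prod.fst) (fun y : Esp n => sqn n y ^ k) (x, ξ).1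
          + dseq (LL.map Prod.snd) (fun y : Esp n => sqn n y ^ l) (x, ξ).2|
        ≤ |dseq (LL.map Prod.fst) (fun y : Esp n => sqn n y ^ k) x|
          + |dseq (LL.map Prod.snd) (fun y : Esp n => sqn n y ^ l) ξ| := abs_add_le _ _
      _ ≤ (C₁ * 4 ^ k) * (1 + ‖x‖ ^ k + ‖ξ‖ ^ l) ^
            ((2:ℝ) - (β.length : ℝ) / k - (α.length : ℝ) / l)
          + (C₂ * 4 ^ l) * (1 + ‖x‖ ^ k + ‖ξ‖ ^ l) ^
            ((2:ℝ) - (β.length : ℝ) / k - (α.length : ℝ) / l) := add_le_add hXbound hYbound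
      _ = (C₁ * 4 ^ k + C₂ * 4 ^ l) * (1 + ‖x‖ ^ k + ‖ξ‖ ^ l) ^
            ((2:ℝ) - (β.length : ℝ) / k - (α.length : ℝ) / l) := by ring
end
end

section
/- Let k, ℓ ≥ 1 be integers, n ≥ 1 and γ > 0. For all multi-indices α, β there exists a constant C_{αβ} > 0 such that for all x, ξ ∈ ℝⁿ with |x|^k + |ξ|^ℓ ≥ 1 one has |∂_x^β ∂_ξ^α (|x|^{2k} + |ξ|^{2ℓ})^γ| ≤ C_{αβ} (|x|^k + |ξ|^ℓ)^{2γ − |β|/k − |α|/ℓ}. In particular the principal part (|x|^{2k} + |ξ|^{2ℓ})^γ of the Weyl symbol of the fractional anharmonic oscillator satisfies, on the region |x|^k + |ξ|^ℓ ≥ 1, the derivative bounds of the symbol class Σ^{2γ}_{k,ℓ}. -/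
noncomputable section

namespace FAux

abbrev E (n : ℕ) := EuclideanSpace ℝ (Fin n) × EuclideanSpace ℝ (Fin n)

variable (k l n : ℕ)

def W (p : E n) : ℝ := ‖p.1‖ ^ k + ‖p.2‖ ^ l

def Om : Set (E n) := {p | 1 / 2 < W k l n p}

def wt : Fin n ⊕ Fin n → ℝ
  | Sum.inl _ => (k : ℝ)⁻¹
  | Sum.inr _ => (l : ℝ)⁻¹

variable {k l n}

lemma W_nonneg (p : E n) : 0 ≤ W k l n p :=
  add_nonneg (pow_nonneg (norm_nonneg _) _) (pow_nonneg (norm_nonneg _) _)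

lemma mem_Om_of_one_le {p : E n} (h : 1 ≤ W k l n p) : p ∈ Om k l n := by
  simp only [Om, Set.mem_setOf_eq]; linarith

lemma isOpen_Om : IsOpen (Om k l n) := by
  have hc : Continuous (W k l n) :=
    ((continuous_fst.norm.pow k).add (continuous_snd.norm.pow l))
  exact isOpen_lt continuous_const hc

variable (k l n)

def SymN : ℕ → ℝ → (E n → ℝ) → Prop
  | 0, m, g => ∃ C, 0 < C ∧ ∀ p : E n, 1 ≤ W k l n p → |g p| ≤ C * W k l n p ^ m
  | (N+1), m, g => SymN 0 m g ∧ (∀ p ∈ Om k l n, DifferentiableAt ℝ g p) ∧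
      ∀ i, SymN N (m - wt k l n i) (fun p => fderiv ℝ g p (phaseDir n i))

variable {k l n}

lemma SymN_zero {m : ℝ} {g : E n → ℝ} : SymN k l n 0 m g ↔
    ∃ C, 0 < C ∧ ∀ p : E n, 1 ≤ W k l n p → |g p| ≤ C * W k l n p ^ m := by
  rw [SymN]

lemma SymN_succ {N : ℕ} {m : ℝ} {g : E n → ℝ} : SymN k l n (N+1) m g ↔
    SymN k l n 0 m g ∧ (∀ p ∈ Om k l n, DifferentiableAt ℝ g p) ∧
      ∀ i, SymN k l n N (m - wt k l n i) (fun p => fderiv ℝ g p (phaseDir n i)) := by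
  conv_lhs => rw [SymN]

lemma congr0 {m : ℝ} {g h : E n → ℝ} (heq : ∀ p ∈ Om k l n, g p = h p)
    (hg : SymN k l n 0 m g) : SymN k l n 0 m h := by
  rw [SymN_zero] at hg ⊢
  obtain ⟨C, hC, hb⟩ := hg
  exact ⟨C, hC, fun p hp => (heq p (mem_Om_of_one_le hp)) ▸ hb p hp⟩

lemma mono0 {m m' : ℝ} {g : E n → ℝ} (hmm : m ≤ m') (hg : SymN k l n 0 m g) :
    SymN k l n 0 m' g := by
  rw [SymN_zero] at hg ⊢
  obtain ⟨C, hC, hb⟩ := hg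
  refine ⟨C, hC, fun p hp => (hb p hp).trans ?_⟩
  have := Real.rpow_le_rpow_of_exponent_le hp hmm
  nlinarith

lemma zero0 (m : ℝ) : SymN k l n 0 m (fun _ => (0:ℝ)) := by
  rw [SymN_zero]
  exact ⟨1, one_pos, fun p hp => by simp [Real.rpow_nonneg (W_nonneg p) m]⟩

lemma const0 (c : ℝ) : SymN k l n 0 0 (fun _ => c) := by
  rw [SymN_zero]
  refine ⟨|c| + 1, by positivity, fun p hp => by
    rw [Real.rpow_zero, mul_one]; linarith [abs_nonneg c]⟩

lemma add0 {m : ℝ} {g h : E n → ℝ} (hg : SymN k l n 0 m g) (hh : SymN k l n 0 m h) :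
    SymN k l n 0 m (fun p => g p + h p) := by
  rw [SymN_zero] at hg hh ⊢
  obtain ⟨C, hC, hb⟩ := hg
  obtain ⟨D, hD, hb'⟩ := hh
  refine ⟨C + D, by linarith, fun p hp => ?_⟩
  calc |g p + h p| ≤ |g p| + |h p| := abs_add_le _ _
  _ ≤ C * W k l n p ^ m + D * W k l n p ^ m := add_le_add (hb p hp) (hb' p hp)
  _ = (C + D) * W k l n p ^ m := by ring

lemma smul0 {m : ℝ} (c : ℝ) {g : E n → ℝ} (hg : SymN k l n 0 m g) :
    SymN k l n 0 m (fun p => c * g p) := by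
  rw [SymN_zero] at hg ⊢
  obtain ⟨C, hC, hb⟩ := hg
  refine ⟨|c| * C + 1, by positivity, fun p hp => ?_⟩
  have h1 := hb p hp
  have h2 : (0:ℝ) ≤ W k l n p ^ m := Real.rpow_nonneg (W_nonneg p) m
  calc |c * g p| = |c| * |g p| := abs_mul _ _
  _ ≤ |c| * (C * W k l n p ^ m) := mul_le_mul_of_nonneg_left h1 (abs_nonneg c)
  _ ≤ (|c| * C + 1) * W k l n p ^ m := by nlinarith [abs_nonneg c]

lemma mul0 {m m' : ℝ} {g h : E n → ℝ} (hg : SymN k l n 0 m g) (hh : SymN k l n 0 m' h) :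
    SymN k l n 0 (m + m') (fun p => g p * h p) := by
  rw [SymN_zero] at hg hh ⊢
  obtain ⟨C, hC, hb⟩ := hg
  obtain ⟨D, hD, hb'⟩ := hh
  refine ⟨C * D, by positivity, fun p hp => ?_⟩
  have hw : (0:ℝ) < W k l n p := lt_of_lt_of_le one_pos hp
  have h1 := hb p hp
  have h2 := hb' p hp
  have h3 : (0:ℝ) ≤ W k l n p ^ m := Real.rpow_nonneg (W_nonneg p) m
  calc |g p * h p| = |g p| * |h p| := abs_mul _ _
  _ ≤ (C * W k l n p ^ m) * (D * W k l n p ^ m') :=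
      mul_le_mul h1 h2 (abs_nonneg _) (by positivity)
  _ = C * D * (W k l n p ^ m * W k l n p ^ m') := by ring
  _ = C * D * W k l n p ^ (m + m') := by rw [← Real.rpow_add hw]

lemma SymN.congr : ∀ (N : ℕ) (m : ℝ) (g h : E n → ℝ),
    (∀ p ∈ Om k l n, g p = h p) → SymN k l n N m g → SymN k l n N m h := by
  intro N
  induction N with
  | zero => intro m g h heq hg; exact congr0 heq hg
  | succ N ih =>
    intro m g h heq hg
    rw [SymN_succ] at hg ⊢
    obtain ⟨hb, hd, hder⟩ := hg
    have hev : ∀ p ∈ Om k l n, h =ᶠ[nhds p] g := fun p hp =>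
      Filter.eventually_of_mem (isOpen_Om.mem_nhds hp) (fun q hq => (heq q hq).symm)
    refine ⟨congr0 heq hb, fun p hp => (hd p hp).congr_of_eventuallyEq (hev p hp),
      fun i => ih _ _ _ ?_ (hder i)⟩
    intro p hp
    rw [(hev p hp).fderiv_eq]

lemma SymN.down : ∀ (N : ℕ) {m : ℝ} {g : E n → ℝ},
    SymN k l n (N+1) m g → SymN k l n N m g := by
  intro N
  induction N with
  | zero => intro m g h; exact (SymN_succ.mp h).1
  | succ N ih =>
    intro m g h
    rw [SymN_succ] at h ⊢
    obtain ⟨hb, hd, hder⟩ := h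
    exact ⟨hb, hd, fun i => ih (hder i)⟩

lemma SymN.mono : ∀ (N : ℕ) {m m' : ℝ} {g : E n → ℝ}, m ≤ m' →
    SymN k l n N m g → SymN k l n N m' g := by
  intro N
  induction N with
  | zero => intro m m' g hmm hg; exact mono0 hmm hg
  | succ N ih =>
    intro m m' g hmm hg
    rw [SymN_succ] at hg ⊢
    obtain ⟨hb, hd, hder⟩ := hg
    exact ⟨mono0 hmm hb, hd, fun i => ih (by linarith) (hder i)⟩

lemma SymN.zero_fun : ∀ (N : ℕ) (m : ℝ), SymN k l n N m (fun _ => (0:ℝ)) := by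
  intro N
  induction N with
  | zero => exact zero0
  | succ N ih =>
    intro m
    rw [SymN_succ]
    refine ⟨zero0 m, fun p _ => differentiableAt_const 0, fun i => ?_⟩
    have h0 : (fun p : E n => fderiv ℝ (fun _ => (0:ℝ)) p (phaseDir n i)) = fun _ => (0:ℝ) := by
      funext p; simp
    rw [h0]
    exact ih _

lemma SymN.const : ∀ (N : ℕ) (c : ℝ), SymN k l n N 0 (fun _ => c) := by
  intro N
  induction N with
  | zero => exact const0
  | succ N ih =>
    intro c
    rw [SymN_succ]
    refine ⟨const0 c, fun p _ => differentiableAt_const c, fun i => ?_⟩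
    have h0 : (fun p : E n => fderiv ℝ (fun _ => c) p (phaseDir n i)) = fun _ => (0:ℝ) := by
      funext p; simp
    rw [h0]
    exact SymN.zero_fun N _

lemma SymN.add : ∀ (N : ℕ) {m : ℝ} {g h : E n → ℝ},
    SymN k l n N m g → SymN k l n N m h → SymN k l n N m (fun p => g p + h p) := by
  intro N
  induction N with
  | zero => intro m g h hg hh; exact add0 hg hh
  | succ N ih =>
    intro m g h hg hh
    rw [SymN_succ] at hg hh ⊢
    obtain ⟨hb, hd, hder⟩ := hg
    obtain ⟨hb', hd', hder'⟩ := hh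
    refine ⟨add0 hb hb', fun p hp => (hd p hp).add (hd' p hp), fun i => ?_⟩
    refine SymN.congr N _ (fun p => fderiv ℝ g p (phaseDir n i) + fderiv ℝ h p (phaseDir n i))
      _ ?_ (ih (hder i) (hder' i))
    intro p hp
    rw [fderiv_fun_add (hd p hp) (hd' p hp)]
    simp

lemma SymN.smul : ∀ (N : ℕ) {m : ℝ} (c : ℝ) {g : E n → ℝ},
    SymN k l n N m g → SymN k l n N m (fun p => c * g p) := by
  intro N
  induction N with
  | zero => intro m c g hg; exact smul0 c hg
  | succ N ih =>
    intro m c g hg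
    rw [SymN_succ] at hg ⊢
    obtain ⟨hb, hd, hder⟩ := hg
    refine ⟨smul0 c hb, fun p hp => (hd p hp).const_mul c, fun i => ?_⟩
    refine SymN.congr N _ (fun p => c * fderiv ℝ g p (phaseDir n i)) _ ?_ (ih c (hder i))
    intro p hp
    rw [fderiv_const_mul (hd p hp) c]
    simp

lemma SymN.mul : ∀ (N : ℕ) {m m' : ℝ} {g h : E n → ℝ},
    SymN k l n N m g → SymN k l n N m' h → SymN k l n N (m + m') (fun p => g p * h p) := by
  intro N
  induction N with
  | zero => intro m m' g h hg hh; exact mul0 hg hh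
  | succ N ih =>
    intro m m' g h hg hh
    have hgN := SymN.down N hg
    have hhN := SymN.down N hh
    rw [SymN_succ] at hg hh ⊢
    obtain ⟨hb, hd, hder⟩ := hg
    obtain ⟨hb', hd', hder'⟩ := hh
    refine ⟨mul0 hb hb', fun p hp => (hd p hp).mul (hd' p hp), fun i => ?_⟩
    have t1 : SymN k l n N (m + m' - wt k l n i)
        (fun p => g p * fderiv ℝ h p (phaseDir n i)) :=
      SymN.mono N (le_of_eq (by ring)) (ih hgN (hder' i))
    have t2 : SymN k l n N (m + m' - wt k l n i)
        (fun p => h p * fderiv ℝ g p (phaseDir n i)) :=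
      SymN.mono N (le_of_eq (by ring)) (ih hhN (hder i))
    refine SymN.congr N _ (fun p => g p * fderiv ℝ h p (phaseDir n i)
        + h p * fderiv ℝ g p (phaseDir n i)) _ ?_ (SymN.add N t1 t2)
    intro p hp
    rw [fderiv_fun_mul (hd p hp) (hd' p hp)]
    simp [mul_comm]

lemma SymN.pow (N : ℕ) {m : ℝ} {g : E n → ℝ} (hg : SymN k l n N m g) :
    ∀ (j : ℕ), SymN k l n N (j * m) (fun p => g p ^ j) := by
  intro j
  induction j with
  | zero =>
    refine SymN.mono N (m := 0) (le_of_eq (by push_cast; ring)) ?_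
    exact SymN.congr N _ (fun _ => (1:ℝ)) _ (fun p _ => by simp) (SymN.const N 1)
  | succ j ih =>
    have h2 := SymN.mul N hg ih
    refine SymN.mono N (m := m + j * m) (le_of_eq (by push_cast; ring)) ?_
    exact SymN.congr N _ _ _ (fun p _ => by ring) h2

lemma SymN.sum (N : ℕ) (m : ℝ) {ι : Type*} (s : Finset ι) (f : ι → E n → ℝ)
    (hf : ∀ j ∈ s, SymN k l n N m (f j)) :
    SymN k l n N m (fun p => ∑ j ∈ s, f j p) := by
  classical
  induction s using Finset.induction_on with
  | empty => exact SymN.congr N m (fun _ => 0) _ (fun p _ => by simp) (SymN.zero_fun N m)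
  | insert a s' hj ih =>
    have := SymN.add N
      (hf a (Finset.mem_insert_self a s')) (ih (fun j hjs => hf j (Finset.mem_insert_of_mem hjs)))
    exact SymN.congr N m _ _ (fun p _ => by rw [Finset.sum_insert hj]) this

variable (n) in
def cf : Fin n ⊕ Fin n → E n → ℝ
  | Sum.inl j => fun p => p.1 j
  | Sum.inr j => fun p => p.2 j

variable (n) in
def cL : Fin n ⊕ Fin n → (E n →L[ℝ] ℝ)
  | Sum.inl j => (EuclideanSpace.proj j).comp (ContinuousLinearMap.fst ℝ _ _)
  | Sum.inr j => (EuclideanSpace.proj j).comp (ContinuousLinearMap.snd ℝ _ _)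

lemma cf_eq (i : Fin n ⊕ Fin n) : cf n i = fun p => cL n i p := by
  cases i <;> rfl

lemma abs_coord_le_norm (x : EuclideanSpace ℝ (Fin n)) (j : Fin n) : |x j| ≤ ‖x‖ := by
  rw [EuclideanSpace.norm_eq, ← Real.sqrt_sq_eq_abs]
  apply Real.sqrt_le_sqrt
  simp only [Real.norm_eq_abs, sq_abs]
  exact Finset.single_le_sum (f := fun i => x i ^ 2) (fun i _ => sq_nonneg _) (Finset.mem_univ j)

lemma norm_sq_eq_sum (x : EuclideanSpace ℝ (Fin n)) : ‖x‖ ^ 2 = ∑ i, x i ^ 2 := by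
  rw [EuclideanSpace.norm_eq, Real.sq_sqrt]
  · simp [sq_abs]
  · positivity

lemma coord_bound (hk : 1 ≤ k) (hl : 1 ≤ l) (i : Fin n ⊕ Fin n) (p : E n)
    (hp : 1 ≤ W k l n p) : |cf n i p| ≤ W k l n p ^ wt k l n i := by
  have hW0 : (0:ℝ) ≤ W k l n p := W_nonneg p
  cases i with
  | inl j =>
    have h1 : ‖p.1‖ ^ k ≤ W k l n p := le_add_of_nonneg_right (pow_nonneg (norm_nonneg _) _)
    have h2 : ‖p.1‖ = (‖p.1‖ ^ k) ^ ((k:ℝ)⁻¹) :=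
      (Real.pow_rpow_inv_natCast (norm_nonneg _) (by omega)).symm
    calc |cf n (Sum.inl j) p| ≤ ‖p.1‖ := abs_coord_le_norm p.1 j
    _ = (‖p.1‖ ^ k) ^ ((k:ℝ)⁻¹) := h2
    _ ≤ W k l n p ^ ((k:ℝ)⁻¹) :=
        Real.rpow_le_rpow (pow_nonneg (norm_nonneg _) _) h1 (by positivity)
    _ = W k l n p ^ wt k l n (Sum.inl j) := by rw [wt]
  | inr j =>
    have h1 : ‖p.2‖ ^ l ≤ W k l n p := le_add_of_nonneg_left (pow_nonneg (norm_nonneg _) _)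
    have h2 : ‖p.2‖ = (‖p.2‖ ^ l) ^ ((l:ℝ)⁻¹) :=
      (Real.pow_rpow_inv_natCast (norm_nonneg _) (by omega)).symm
    calc |cf n (Sum.inr j) p| ≤ ‖p.2‖ := abs_coord_le_norm p.2 j
    _ = (‖p.2‖ ^ l) ^ ((l:ℝ)⁻¹) := h2
    _ ≤ W k l n p ^ ((l:ℝ)⁻¹) :=
        Real.rpow_le_rpow (pow_nonneg (norm_nonneg _) _) h1 (by positivity)
    _ = W k l n p ^ wt k l n (Sum.inr j) := by rw [wt]

lemma coordSym0 (hk : 1 ≤ k) (hl : 1 ≤ l) (i₀ : Fin n ⊕ Fin n) :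
    SymN k l n 0 (wt k l n i₀) (cf n i₀) := by
  rw [SymN_zero]
  exact ⟨1, one_pos, fun p hp => by simpa using coord_bound hk hl i₀ p hp⟩

lemma coordSym (hk : 1 ≤ k) (hl : 1 ≤ l) :
    ∀ (N : ℕ) (i₀ : Fin n ⊕ Fin n), SymN k l n N (wt k l n i₀) (cf n i₀) := by
  intro N
  induction N with
  | zero => exact coordSym0 hk hl
  | succ N ih =>
    intro i₀
    rw [SymN_succ]
    refine ⟨coordSym0 hk hl i₀, ?_, ?_⟩
    · intro p _
      rw [cf_eq]
      exact (cL n i₀).differentiableAt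
    · intro i
      have hf : ∀ p : E n, fderiv ℝ (cf n i₀) p = cL n i₀ := by
        intro p; rw [cf_eq]; exact (cL n i₀).fderiv
      have hc : SymN k l n N (wt k l n i₀ - wt k l n i) (fun _ => (cL n i₀) (phaseDir n i)) := by
        rcases i₀ with j | j <;> rcases i with j' | j'
        · by_cases hjj : j = j'
          · subst hjj
            have hv : (cL n (Sum.inl j)) (phaseDir n (Sum.inl j)) = 1 := by
              simp [cL, phaseDir, EuclideanSpace.single_apply]
            rw [hv, sub_self]
            exact SymN.const N 1
          · have hv : (cL n (Sum.inl j)) (phaseDir n (Sum.inl j')) = 0 := by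
              simp [cL, phaseDir, EuclideanSpace.single_apply]
              intro h; exact hjj h
            rw [hv]; exact SymN.zero_fun N _
        · have hv : (cL n (Sum.inl j)) (phaseDir n (Sum.inr j')) = 0 := by
            simp [cL, phaseDir]
          rw [hv]; exact SymN.zero_fun N _
        · have hv : (cL n (Sum.inr j)) (phaseDir n (Sum.inl j')) = 0 := by
            simp [cL, phaseDir]
          rw [hv]; exact SymN.zero_fun N _
        · by_cases hjj : j = j'
          · subst hjj
            have hv : (cL n (Sum.inr j)) (phaseDir n (Sum.inr j)) = 1 := by
              simp [cL, phaseDir, EuclideanSpace.single_apply]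
            rw [hv, sub_self]
            exact SymN.const N 1
          · have hv : (cL n (Sum.inr j)) (phaseDir n (Sum.inr j')) = 0 := by
              simp [cL, phaseDir, EuclideanSpace.single_apply]
              intro h; exact hjj h
            rw [hv]; exact SymN.zero_fun N _
      refine SymN.congr N _ _ _ ?_ hc
      intro p _
      rw [hf p]

variable (n) in
def S1 : E n → ℝ := fun p => ∑ j, (p.1 j) ^ 2

variable (n) in
def S2 : E n → ℝ := fun p => ∑ j, (p.2 j) ^ 2

lemma symS1 (hk : 1 ≤ k) (hl : 1 ≤ l) (N : ℕ) :
    SymN k l n N (2 * (k:ℝ)⁻¹) (S1 n) := by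
  have h : ∀ j : Fin n, SymN k l n N (2 * (k:ℝ)⁻¹) (fun p => cf n (Sum.inl j) p ^ 2) := by
    intro j
    have := SymN.pow N (coordSym hk hl N (Sum.inl j)) 2
    refine SymN.mono N (le_of_eq ?_) this
    rw [wt]; push_cast; ring
  exact SymN.sum N _ Finset.univ _ (fun j _ => h j)

lemma symS2 (hk : 1 ≤ k) (hl : 1 ≤ l) (N : ℕ) :
    SymN k l n N (2 * (l:ℝ)⁻¹) (S2 n) := by
  have h : ∀ j : Fin n, SymN k l n N (2 * (l:ℝ)⁻¹) (fun p => cf n (Sum.inr j) p ^ 2) := by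
    intro j
    have := SymN.pow N (coordSym hk hl N (Sum.inr j)) 2
    refine SymN.mono N (le_of_eq ?_) this
    rw [wt]; push_cast; ring
  exact SymN.sum N _ Finset.univ _ (fun j _ => h j)

variable (k l n) in
def U : E n → ℝ := fun p => ‖p.1‖ ^ (2 * k) + ‖p.2‖ ^ (2 * l)

lemma U_eq : U k l n = fun p => (S1 n p) ^ k + (S2 n p) ^ l := by
  funext p
  simp only [U]
  have h1 : ‖p.1‖ ^ (2 * k) = (S1 n p) ^ k := by
    rw [pow_mul, norm_sq_eq_sum]; rfl
  have h2 : ‖p.2‖ ^ (2 * l) = (S2 n p) ^ l := by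
    rw [pow_mul, norm_sq_eq_sum]; rfl
  rw [h1, h2]

lemma symU_poly (hk : 1 ≤ k) (hl : 1 ≤ l) (N : ℕ) : SymN k l n N 2 (U k l n) := by
  rw [U_eq]
  have hk0 : (k:ℝ) ≠ 0 := by positivity
  have hl0 : (l:ℝ) ≠ 0 := by positivity
  have h1 : SymN k l n N 2 (fun p => S1 n p ^ k) := by
    refine SymN.mono N (le_of_eq ?_) (SymN.pow N (symS1 hk hl N) k)
    field_simp
  have h2 : SymN k l n N 2 (fun p => S2 n p ^ l) := by
    refine SymN.mono N (le_of_eq ?_) (SymN.pow N (symS2 hk hl N) l)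
    field_simp
  exact SymN.add N h1 h2

lemma U_bounds (p : E n) :
    W k l n p ^ 2 / 2 ≤ U k l n p ∧ U k l n p ≤ W k l n p ^ 2 := by
  have ha : (0:ℝ) ≤ ‖p.1‖ ^ k := pow_nonneg (norm_nonneg _) _
  have hb : (0:ℝ) ≤ ‖p.2‖ ^ l := pow_nonneg (norm_nonneg _) _
  have h1 : ‖p.1‖ ^ (2 * k) = (‖p.1‖ ^ k) ^ 2 := by rw [mul_comm, pow_mul]
  have h2 : ‖p.2‖ ^ (2 * l) = (‖p.2‖ ^ l) ^ 2 := by rw [mul_comm, pow_mul]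
  constructor
  · show W k l n p ^ 2 / 2 ≤ ‖p.1‖ ^ (2*k) + ‖p.2‖ ^ (2*l)
    rw [h1, h2, W]
    nlinarith [sq_nonneg (‖p.1‖ ^ k - ‖p.2‖ ^ l)]
  · show ‖p.1‖ ^ (2*k) + ‖p.2‖ ^ (2*l) ≤ W k l n p ^ 2
    rw [h1, h2, W]
    nlinarith [mul_nonneg ha hb]

lemma U_pos {p : E n} (hp : p ∈ Om k l n) : 0 < U k l n p := by
  have h := (U_bounds (k := k) (l := l) p).1
  have hw : (1:ℝ)/2 < W k l n p := hp
  nlinarith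

lemma symU0 (e : ℝ) : SymN k l n 0 (2 * e) (fun p => U k l n p ^ e) := by
  rw [SymN_zero]
  refine ⟨(2:ℝ) ^ |e|, Real.rpow_pos_of_pos two_pos _, fun p hp => ?_⟩
  have hW0 : (0:ℝ) ≤ W k l n p := W_nonneg p
  have hWpos : (0:ℝ) < W k l n p := lt_of_lt_of_le one_pos hp
  obtain ⟨hU1, hU2⟩ := U_bounds (k := k) (l := l) p
  have hUpos : (0:ℝ) < U k l n p := by nlinarith
  have habs : |U k l n p ^ e| = U k l n p ^ e :=
    abs_of_nonneg (Real.rpow_nonneg hUpos.le e)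
  have hsq : (W k l n p ^ 2 : ℝ) = W k l n p ^ ((2:ℕ):ℝ) := (Real.rpow_natCast _ 2).symm
  have hWe : (W k l n p ^ 2) ^ e = W k l n p ^ (2 * e) := by
    rw [hsq, ← Real.rpow_mul hW0]
    norm_num
  have hone : (1:ℝ) ≤ (2:ℝ) ^ |e| := by
    calc (1:ℝ) = (2:ℝ) ^ (0:ℝ) := (Real.rpow_zero 2).symm
    _ ≤ (2:ℝ) ^ |e| := Real.rpow_le_rpow_of_exponent_le one_le_two (abs_nonneg e)
  have hWe0 : (0:ℝ) ≤ W k l n p ^ (2*e) := Real.rpow_nonneg hW0 _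
  rw [habs]
  rcases le_or_gt 0 e with he | he
  · calc U k l n p ^ e ≤ (W k l n p ^ 2) ^ e := Real.rpow_le_rpow hUpos.le hU2 he
    _ = W k l n p ^ (2*e) := hWe
    _ ≤ (2:ℝ) ^ |e| * W k l n p ^ (2*e) := by nlinarith
  · have hhpos : (0:ℝ) < W k l n p ^ 2 / 2 := by positivity
    calc U k l n p ^ e ≤ (W k l n p ^ 2 / 2) ^ e :=
        Real.rpow_le_rpow_of_nonpos hhpos hU1 he.le
    _ = (W k l n p ^ 2) ^ e / (2:ℝ) ^ e := Real.div_rpow (by positivity) (by norm_num) e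
    _ = (2:ℝ) ^ (-e) * (W k l n p ^ 2) ^ e := by
        rw [Real.rpow_neg (by norm_num)]; ring
    _ = (2:ℝ) ^ |e| * W k l n p ^ (2*e) := by rw [abs_of_neg he, hWe]

lemma symU (hk : 1 ≤ k) (hl : 1 ≤ l) :
    ∀ (N : ℕ) (e : ℝ), SymN k l n N (2 * e) (fun p => U k l n p ^ e) := by
  intro N
  induction N with
  | zero => exact fun e => symU0 e
  | succ N ih =>
    intro e
    rw [SymN_succ]
    have hUdiff : ∀ p ∈ Om k l n, DifferentiableAt ℝ (U k l n) p :=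
      (SymN_succ.mp (symU_poly hk hl 1)).2.1
    refine ⟨symU0 e, ?_, ?_⟩
    · intro p hp
      exact (hUdiff p hp).rpow_const (Or.inl (U_pos hp).ne')
    · intro i
      have hDU : SymN k l n N (2 - wt k l n i)
          (fun p => fderiv ℝ (U k l n) p (phaseDir n i)) :=
        (SymN_succ.mp (symU_poly hk hl (N+1))).2.2 i
      have hcombo : SymN k l n N (2 * e - wt k l n i)
          (fun p => e * (U k l n p ^ (e-1) * fderiv ℝ (U k l n) p (phaseDir n i))) := by
        have := SymN.smul N e (SymN.mul N (ih (e-1)) hDU)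
        refine SymN.mono N (le_of_eq (by ring)) this
      refine SymN.congr N _ _ _ ?_ hcombo
      intro p hp
      have h := ((hUdiff p hp).hasFDerivAt.rpow_const
        (p := e) (Or.inl (U_pos hp).ne')).fderiv
      rw [h]
      simp [ContinuousLinearMap.smul_apply]
      ring


variable (k l n) in
def wtsum (L : List (Fin n ⊕ Fin n)) : ℝ := (L.map (wt k l n)).sum

lemma main_lemma (hk : 1 ≤ k) (hl : 1 ≤ l) :
    ∀ (L : List (Fin n ⊕ Fin n)) (m : ℝ) (g : E n → ℝ),
    (∀ N, SymN k l n N m g) →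
    ∃ h : E n → ℝ, (∀ N, SymN k l n N (m - wtsum k l n L) h) ∧
      ∀ p ∈ Om k l n, pderivSeq n L (fun q => ((g q : ℝ) : ℂ)) p = ((h p : ℝ) : ℂ) := by
  intro L
  induction L with
  | nil =>
    intro m g hg
    refine ⟨g, fun N => ?_, fun p _ => rfl⟩
    have : wtsum k l n ([] : List (Fin n ⊕ Fin n)) = 0 := by simp [wtsum]
    rw [this, sub_zero]
    exact hg N
  | cons i L ih =>
    intro m g hg
    obtain ⟨h, hs, heq⟩ := ih m g hg
    refine ⟨fun p => fderiv ℝ h p (phaseDir n i), fun N => ?_, fun p hp => ?_⟩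
    · have hd := (SymN_succ.mp (hs (N+1))).2.2 i
      refine SymN.mono N (le_of_eq ?_) hd
      simp [wtsum]
      ring
    · show fderiv ℝ (pderivSeq n L fun q => ((g q : ℝ) : ℂ)) p (phaseDir n i) = _
      have hev : (pderivSeq n L fun q => ((g q : ℝ) : ℂ)) =ᶠ[nhds p]
          (fun q => ((h q : ℝ) : ℂ)) :=
        Filter.eventually_of_mem (isOpen_Om.mem_nhds hp) heq
      rw [hev.fderiv_eq]
      have hdiff : DifferentiableAt ℝ h p := (SymN_succ.mp (hs 1)).2.1 p hp
      have hF : HasFDerivAt (fun q => ((h q : ℝ) : ℂ))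
          (Complex.ofRealCLM.comp (fderiv ℝ h p)) p :=
        Complex.ofRealCLM.hasFDerivAt.comp p hdiff.hasFDerivAt
      rw [hF.fderiv]
      simp

lemma wtsum_eq (β α : List (Fin n)) :
    wtsum k l n (β.map Sum.inl ++ α.map Sum.inr)
      = β.length * (k:ℝ)⁻¹ + α.length * (l:ℝ)⁻¹ := by
  have h1 : ∀ (γ : List (Fin n)) (f : Fin n → Fin n ⊕ Fin n) (c : ℝ),
      (∀ j, wt k l n (f j) = c) → ((γ.map f).map (wt k l n)).sum = γ.length * c := by
    intro γ f c hf
    induction γ with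
    | nil => simp
    | cons a γ ihg =>
      simp only [List.map_cons, List.sum_cons, List.length_cons, hf a]
      rw [ihg]; push_cast; ring
  simp only [wtsum, List.map_append, List.sum_append]
  rw [h1 β Sum.inl ((k:ℝ)⁻¹) (fun j => by rw [wt]), h1 α Sum.inr ((l:ℝ)⁻¹) (fun j => by rw [wt])]

end FAux

/-- On the region `|x|^k + |ξ|^ℓ ≥ 1`, the principal part `(|x|^{2k} + |ξ|^{2ℓ})^γ`
of the Weyl symbol of the fractional anharmonic oscillator satisfies the derivative
bounds of the symbol class `Σ^{2γ}_{k,ℓ}`: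
`|∂_x^β ∂_ξ^α (|x|^{2k}+|ξ|^{2ℓ})^γ| ≤ C_{αβ} (|x|^k + |ξ|^ℓ)^{2γ - |β|/k - |α|/ℓ}`. -/
theorem fractional_anharmonic_principal_symbol_bounds (k l n : ℕ) (γ : ℝ)
    (hk : 1 ≤ k) (hl : 1 ≤ l) (hn : 1 ≤ n) (hγ : 0 < γ) :
    ∀ (β α : List (Fin n)), ∃ C : ℝ, 0 < C ∧
      ∀ x ξ : EuclideanSpace ℝ (Fin n), 1 ≤ ‖x‖ ^ k + ‖ξ‖ ^ l →
        ‖pderivSeq n (β.map Sum.inl ++ α.map Sum.inr)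
            (fun p => (((‖p.1‖ ^ (2 * k) + ‖p.2‖ ^ (2 * l) : ℝ) ^ γ : ℝ) : ℂ)) (x, ξ)‖ ≤
          C * (‖x‖ ^ k + ‖ξ‖ ^ l) ^
            (2 * γ - (β.length : ℝ) / k - (α.length : ℝ) / l) := by
  intro β α
  obtain ⟨h, hs, heq⟩ := FAux.main_lemma hk hl (β.map Sum.inl ++ α.map Sum.inr) (2 * γ)
    (fun p => FAux.U k l n p ^ γ) (fun N => FAux.symU hk hl N γ)
  obtain ⟨C, hC, hb⟩ := FAux.SymN_zero.mp (hs 0)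
  refine ⟨C, hC, ?_⟩
  intro x ξ hW
  have hW' : 1 ≤ FAux.W k l n (x, ξ) := hW
  have hp : (x, ξ) ∈ FAux.Om k l n := FAux.mem_Om_of_one_le hW'
  have hfun : (fun p : FAux.E n =>
      (((‖p.1‖ ^ (2 * k) + ‖p.2‖ ^ (2 * l) : ℝ) ^ γ : ℝ) : ℂ))
      = (fun q => ((FAux.U k l n q ^ γ : ℝ) : ℂ)) := rfl
  rw [hfun, heq (x, ξ) hp, Complex.norm_real, Real.norm_eq_abs]
  have hbd := hb (x, ξ) hW'
  have hk0 : (k:ℝ) ≠ 0 := by positivity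
  have hl0 : (l:ℝ) ≠ 0 := by positivity
  have hexp : 2 * γ - (β.length : ℝ) / k - (α.length : ℝ) / l
      = 2 * γ - FAux.wtsum k l n (β.map Sum.inl ++ α.map Sum.inr) := by
    rw [FAux.wtsum_eq]
    field_simp
    ring
  rw [hexp]
  exact hbd
end
end

section
/- Let k, ℓ ≥ 1 be integers, n ≥ 1, γ > 0, and 0 < p̃, q̃ ≤ ∞. Set σ = (n/(2γ))(1/(k p̃) + 1/(ℓ q̃)) (with 1/∞ = 0). Then there exists N₀ ∈ ℕ such that for every natural number N ≥ N₀ there is a constant C > 0 with: for all t ∈ (0,1], ( ∫_{ℝⁿ} ( ∫_{ℝⁿ} ( 1 + t^N (1 + |x|^k + |ξ|^ℓ)^{2γN} )^{−p̃} dx )^{q̃/p̃} dξ )^{1/q̃} ≤ C t^{−σ}, with the usual essential-supremum modifications when p̃ = ∞ or q̃ = ∞. In particular, for N large enough the integral ∫_{ℝⁿ} ( ∫_{ℝⁿ} (1 + (|x|^k + |ξ|^ℓ)^{2γN})^{−p̃} dx )^{q̃/p̃} dξ is finite. -/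
open scoped ENNReal
open MeasureTheory

noncomputable section

/-- The `L^p` "norm" (`0 < p ≤ ∞`) of an `ℝ≥0∞`-valued function, with the usual
essential-supremum convention for `p = ∞`. -/
def eLp {α : Type*} [MeasurableSpace α] (p : ℝ≥0∞) (μ : Measure α) (f : α → ℝ≥0∞) : ℝ≥0∞ :=
  if p = ∞ then essSup f μ else (∫⁻ a, f a ^ p.toReal ∂μ) ^ (1 / p.toReal)

/-- The mixed Lebesgue `L^{p,q}` norm on `ℝⁿ × ℝⁿ` (first in `x`, then in `ξ`). -/
def mixedLp (n : ℕ) (p q : ℝ≥0∞)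
    (F : EuclideanSpace ℝ (Fin n) → EuclideanSpace ℝ (Fin n) → ℝ≥0∞) : ℝ≥0∞ :=
  eLp q volume (fun ξ => eLp p volume (fun x => F x ξ))

open Real Set

lemma one_add_rpow_le {v R : ℝ} (hv : 0 ≤ v) (hR : 0 ≤ R) :
    (1 + v) ^ R ≤ 2 ^ R * (1 + v ^ R) := by
  have h1 : (1 + v) ≤ 2 * max 1 v := by
    rcases le_total v 1 with h | h
    · simp [max_eq_left h]; linarith
    · simp [max_eq_right h]; linarith
  calc (1 + v) ^ R ≤ (2 * max 1 v) ^ R :=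
        Real.rpow_le_rpow (by linarith) h1 hR
    _ = 2 ^ R * (max 1 v) ^ R := Real.mul_rpow (by norm_num) (le_max_of_le_left zero_le_one)
    _ ≤ 2 ^ R * (1 + v ^ R) := by
        gcongr
        rcases le_total v 1 with h | h
        · rw [max_eq_left h, Real.one_rpow]
          have := Real.rpow_nonneg hv R; linarith
        · rw [max_eq_right h]
          have : (1:ℝ) ≤ v ^ R := Real.one_le_rpow h hR
          nlinarith [Real.rpow_nonneg hv R]

lemma sep_key {A B W τ R : ℝ} (hA : 0 ≤ A) (hB : 0 ≤ B) (hW : 0 ≤ W)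
    (h1 : A ≤ W) (h2 : B ≤ W) (h3 : A * B ≤ W ^ 2) (hτ : 0 ≤ τ) (hR : 0 ≤ R) :
    (1 + τ * W ^ R)⁻¹ ≤ (1 + τ * A ^ R) ^ (-(1/2) : ℝ) * (1 + τ * B ^ R) ^ (-(1/2) : ℝ) := by
  have hAR : (0:ℝ) ≤ A ^ R := Real.rpow_nonneg hA R
  have hBR : (0:ℝ) ≤ B ^ R := Real.rpow_nonneg hB R
  have hP : (0:ℝ) < 1 + τ * A ^ R := by positivity
  have hQ : (0:ℝ) < 1 + τ * B ^ R := by positivity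
  have hD : (0:ℝ) < 1 + τ * W ^ R := by positivity
  have e1 : A ^ R ≤ W ^ R := Real.rpow_le_rpow hA h1 hR
  have e2 : B ^ R ≤ W ^ R := Real.rpow_le_rpow hB h2 hR
  have e3 : A ^ R * B ^ R ≤ W ^ R * W ^ R := by
    rw [← Real.mul_rpow hA hB, ← Real.mul_rpow hW hW, ← sq W]
    exact Real.rpow_le_rpow (by positivity) (by nlinarith) hR
  have key : (1 + τ * A ^ R) * (1 + τ * B ^ R) ≤ (1 + τ * W ^ R) ^ 2 := by
    have t1 : τ * A ^ R ≤ τ * W ^ R := by gcongr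
    have t2 : τ * B ^ R ≤ τ * W ^ R := by gcongr
    have t3 : τ * A ^ R * (τ * B ^ R) ≤ τ * W ^ R * (τ * W ^ R) := by
      have := mul_le_mul (mul_le_mul_of_nonneg_left e1 hτ) (mul_le_mul_of_nonneg_left e2 hτ)
        (by positivity) (by positivity)
      linarith [this]
    nlinarith [t1, t2, t3]
  calc (1 + τ * W ^ R)⁻¹ = ((1 + τ * W ^ R) ^ 2) ^ (-(1/2) : ℝ) := by
        rw [← Real.rpow_natCast (1 + τ * W ^ R) 2, ← Real.rpow_mul hD.le]
        norm_num [Real.rpow_neg_one]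
    _ ≤ ((1 + τ * A ^ R) * (1 + τ * B ^ R)) ^ (-(1/2) : ℝ) :=
        Real.rpow_le_rpow_of_nonpos (by positivity) key (by norm_num)
    _ = (1 + τ * A ^ R) ^ (-(1/2) : ℝ) * (1 + τ * B ^ R) ^ (-(1/2) : ℝ) :=
        Real.mul_rpow hP.le hQ.le

lemma factor {u s τ R : ℝ} {k : ℕ} (hu : 0 ≤ u) (hs : 0 ≤ s) (hτ : 0 ≤ τ) (hR : 0 ≤ R)
    (hsk : ((s ^ k : ℝ)) ^ R = τ) :
    (1 + τ * (1 + u ^ k) ^ R) ^ (-(1/2) : ℝ) ≤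
      2 ^ (R/2) * (1 + (s * u) ^ k) ^ (-(R/2)) := by
  have hX : (0:ℝ) < 1 + (s*u) ^ k := by positivity
  have hP : (0:ℝ) < 1 + τ * (1 + u ^ k) ^ R := by positivity
  have step1 : (1 + (s*u) ^ k) ^ R ≤ 2 ^ R * (1 + τ * (1 + u ^ k) ^ R) := by
    calc (1 + (s*u) ^ k) ^ R ≤ 2 ^ R * (1 + ((s*u)^k) ^ R) :=
          one_add_rpow_le (by positivity) hR
      _ ≤ 2 ^ R * (1 + τ * (1 + u ^ k) ^ R) := by
          gcongr 2 ^ R * (1 + ?_)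
          have e : ((s*u)^k : ℝ) ^ R = τ * (u^k) ^ R := by
            rw [mul_pow, Real.mul_rpow (by positivity) (by positivity), hsk]
          rw [e]
          exact mul_le_mul_of_nonneg_left
            (Real.rpow_le_rpow (by positivity) (by linarith [pow_nonneg hu k]) hR) hτ
  have h2 : (2:ℝ) ^ (-R) * (1 + (s*u) ^ k) ^ R ≤ 1 + τ * (1 + u ^ k) ^ R := by
    rw [Real.rpow_neg (by norm_num)]
    rw [inv_mul_le_iff₀ (by positivity)]
    linarith [step1]
  calc (1 + τ * (1 + u ^ k) ^ R) ^ (-(1/2) : ℝ)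
      ≤ ((2:ℝ) ^ (-R) * (1 + (s*u) ^ k) ^ R) ^ (-(1/2) : ℝ) :=
        Real.rpow_le_rpow_of_nonpos (by positivity) h2 (by norm_num)
    _ = 2 ^ (R/2) * (1 + (s * u) ^ k) ^ (-(R/2)) := by
        rw [Real.mul_rpow (by positivity) (by positivity), ← Real.rpow_mul (by norm_num),
          ← Real.rpow_mul hX.le]
        ring_nf

lemma eLp_mono {α : Type*} [MeasurableSpace α] {p : ℝ≥0∞} {μ : Measure α} {f g : α → ℝ≥0∞}
    (h : ∀ a, f a ≤ g a) : eLp p μ f ≤ eLp p μ g := by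
  unfold eLp; split_ifs
  · exact essSup_mono_ae (Filter.Eventually.of_forall h)
  · exact ENNReal.rpow_le_rpow
      (lintegral_mono fun a => ENNReal.rpow_le_rpow (h a) ENNReal.toReal_nonneg)
      (by positivity)

lemma eLp_const_mul {α : Type*} [MeasurableSpace α] {p : ℝ≥0∞} (hp : p ≠ 0) {μ : Measure α}
    (c : ℝ≥0∞) (hc : c ≠ ∞) (f : α → ℝ≥0∞) :
    eLp p μ (fun a => c * f a) = c * eLp p μ f := by
  unfold eLp; split_ifs with h
  · exact ENNReal.essSup_const_mul
  · have hpT : 0 < p.toReal := ENNReal.toReal_pos hp h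
    have hcp : c ^ p.toReal ≠ ∞ := ENNReal.rpow_ne_top_of_nonneg hpT.le hc
    simp_rw [ENNReal.mul_rpow_of_nonneg _ _ hpT.le]
    rw [lintegral_const_mul' _ _ hcp,
      ENNReal.mul_rpow_of_nonneg _ _ (by positivity : (0:ℝ) ≤ 1/p.toReal),
      ← ENNReal.rpow_mul, mul_one_div_cancel hpT.ne', ENNReal.rpow_one]

lemma eLp_top_le_one {α : Type*} [MeasurableSpace α] {μ : Measure α} {f : α → ℝ≥0∞}
    (h : ∀ a, f a ≤ 1) : eLp ∞ μ f ≤ 1 := by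
  unfold eLp; rw [if_pos rfl]
  exact essSup_le_of_ae_le 1 (Filter.Eventually.of_forall h)

lemma finite_core (n : ℕ) {ρ s : ℝ} (hρ : 0 ≤ ρ) (hs : 0 ≤ s) (h : (n:ℝ) < ρ * s) :
    ∫⁻ x : EuclideanSpace ℝ (Fin n), ENNReal.ofReal ((1 + ‖x‖ ^ ρ) ^ (-s)) < ∞ := by
  have key : ∀ x : EuclideanSpace ℝ (Fin n),
      (1 + ‖x‖ ^ ρ) ^ (-s) ≤ 2 ^ (ρ*s) * (1 + ‖x‖) ^ (-(ρ*s)) := by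
    intro x
    have hu : (0:ℝ) ≤ ‖x‖ := norm_nonneg x
    have h1 : (2:ℝ) ^ (-ρ) * (1 + ‖x‖) ^ ρ ≤ 1 + ‖x‖ ^ ρ := by
      rw [Real.rpow_neg (by norm_num), inv_mul_le_iff₀ (by positivity)]
      linarith [one_add_rpow_le hu hρ]
    calc (1 + ‖x‖ ^ ρ) ^ (-s) ≤ ((2:ℝ) ^ (-ρ) * (1 + ‖x‖) ^ ρ) ^ (-s) :=
          Real.rpow_le_rpow_of_nonpos (by positivity) h1 (by linarith)
      _ = 2 ^ (ρ*s) * (1 + ‖x‖) ^ (-(ρ*s)) := by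
          rw [Real.mul_rpow (by positivity) (by positivity), ← Real.rpow_mul (by norm_num),
            ← Real.rpow_mul (by positivity)]
          ring_nf
  calc ∫⁻ x : EuclideanSpace ℝ (Fin n), ENNReal.ofReal ((1 + ‖x‖ ^ ρ) ^ (-s))
      ≤ ∫⁻ x : EuclideanSpace ℝ (Fin n),
          ENNReal.ofReal (2 ^ (ρ*s) * (1 + ‖x‖) ^ (-(ρ*s))) :=
        lintegral_mono fun x => ENNReal.ofReal_le_ofReal (key x)
    _ = ENNReal.ofReal (2 ^ (ρ*s)) *
          ∫⁻ x : EuclideanSpace ℝ (Fin n), ENNReal.ofReal ((1 + ‖x‖) ^ (-(ρ*s))) := by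
        simp_rw [ENNReal.ofReal_mul (by positivity : (0:ℝ) ≤ 2 ^ (ρ*s))]
        rw [lintegral_const_mul' _ _ ENNReal.ofReal_ne_top]
    _ < ∞ := by
        refine ENNReal.mul_lt_top ENNReal.ofReal_lt_top ?_
        refine finite_integral_one_add_norm ?_
        simpa using h

lemma aux_lintegral_smul {n : ℕ} (s : ℝ) (hs : s ≠ 0)
    (h : EuclideanSpace ℝ (Fin n) → ℝ≥0∞) (hm : Measurable h) :
    ∫⁻ x, h (s • x) = ENNReal.ofReal |(s ^ n)⁻¹| * ∫⁻ y, h y := by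
  rw [← lintegral_map hm (measurable_const_smul s), Measure.map_addHaar_smul volume hs,
    lintegral_smul_measure]
  simp

lemma main1 (n k : ℕ) (p : ℝ≥0∞) (hp : p ≠ 0) (r : ℝ) (hr : 0 < r)
    (hcond : p ≠ ∞ → (n:ℝ) < k * r * p.toReal) :
    ∃ C : ℝ, 0 < C ∧ ∀ s : ℝ, s ∈ Set.Ioc (0:ℝ) 1 →
      eLp p volume (fun x : EuclideanSpace ℝ (Fin n) =>
          ENNReal.ofReal ((1 + (s * ‖x‖) ^ k) ^ (-r))) ≤
        ENNReal.ofReal C * ENNReal.ofReal (s ^ (-(n:ℝ) * (1/p).toReal)) := by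
  by_cases hpi : p = ∞
  · refine ⟨1, one_pos, fun s hs => ?_⟩
    subst hpi
    have h1 : ∀ x : EuclideanSpace ℝ (Fin n),
        ENNReal.ofReal ((1 + (s * ‖x‖) ^ k) ^ (-r)) ≤ 1 := fun x => by
      rw [← ENNReal.ofReal_one]
      exact ENNReal.ofReal_le_ofReal <| Real.rpow_le_one_of_one_le_of_nonpos
        (le_add_of_nonneg_right (pow_nonneg (mul_nonneg hs.1.le (norm_nonneg x)) k)) (by linarith)
    calc eLp ∞ volume _ ≤ 1 := eLp_top_le_one h1
      _ = _ := by
        simp [ENNReal.toReal_inv]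
  · have hpT : 0 < p.toReal := ENNReal.toReal_pos hp hpi
    set h : EuclideanSpace ℝ (Fin n) → ℝ≥0∞ :=
      fun y => ENNReal.ofReal ((1 + ‖y‖ ^ (k:ℝ)) ^ (-(r * p.toReal))) with hh
    have hIfin : (∫⁻ y, h y) < ∞ := by
      simp only [hh]
      refine finite_core n ?_ ?_ ?_
      · positivity
      · positivity
      · have := hcond hpi
        calc (n:ℝ) < k * r * p.toReal := this
          _ = (k:ℝ) * (r * p.toReal) := by ring
    set I : ℝ≥0∞ := ∫⁻ y, h y with hI
    refine ⟨max 1 ((I ^ (1/p.toReal)).toReal),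
      lt_of_lt_of_le one_pos (le_max_left _ _), fun s hs => ?_⟩
    obtain ⟨hs0, hs1⟩ := hs
    have heq : ∀ x : EuclideanSpace ℝ (Fin n),
        (ENNReal.ofReal ((1 + (s * ‖x‖) ^ k) ^ (-r))) ^ p.toReal = h (s • x) := fun x => by
      rw [hh, ENNReal.ofReal_rpow_of_pos (by positivity)]
      congr 1
      rw [norm_smul, Real.norm_eq_abs, abs_of_pos hs0,
        Real.rpow_natCast (s * ‖x‖) k, ← Real.rpow_mul (by positivity), neg_mul]
    unfold eLp
    rw [if_neg hpi]
    simp_rw [heq]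
    rw [aux_lintegral_smul s hs0.ne' h (by rw [hh]; fun_prop)]
    rw [ENNReal.mul_rpow_of_nonneg _ _ (by positivity : (0:ℝ) ≤ 1/p.toReal)]
    have e1 : ENNReal.ofReal |(s ^ n)⁻¹| ^ (1/p.toReal)
        = ENNReal.ofReal (s ^ (-(n:ℝ) * (1/p).toReal)) := by
      rw [abs_of_pos (by positivity), ← Real.rpow_natCast s n, ← Real.rpow_neg hs0.le,
        ENNReal.ofReal_rpow_of_pos (by positivity), ← Real.rpow_mul hs0.le]
      simp [one_div, ENNReal.toReal_inv]
    rw [e1]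
    have e2 : I ^ (1/p.toReal) ≤ ENNReal.ofReal (max 1 ((I ^ (1/p.toReal)).toReal)) := by
      have hfin : I ^ (1/p.toReal) ≠ ∞ :=
        (ENNReal.rpow_lt_top_of_nonneg (by positivity) hIfin.ne).ne
      calc I ^ (1/p.toReal) = ENNReal.ofReal ((I ^ (1/p.toReal)).toReal) :=
            (ENNReal.ofReal_toReal hfin).symm
        _ ≤ _ := ENNReal.ofReal_le_ofReal (le_max_right _ _)
    rw [mul_comm (ENNReal.ofReal (max 1 ((I ^ (1/p.toReal)).toReal)))]
    exact mul_le_mul_right e2 _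

lemma main2 (n k : ℕ) (p : ℝ≥0∞) (hp : p ≠ 0) (R : ℝ) (hR : 0 < R)
    (hcond : p ≠ ∞ → (n:ℝ) < k * R * p.toReal / 2) :
    eLp p volume (fun x : EuclideanSpace ℝ (Fin n) =>
      ENNReal.ofReal ((1 + ((‖x‖:ℝ) ^ k) ^ R) ^ (-(1/2):ℝ))) < ∞ := by
  by_cases hpi : p = ∞
  · subst hpi
    refine lt_of_le_of_lt (eLp_top_le_one fun x => ?_) ENNReal.one_lt_top
    rw [← ENNReal.ofReal_one]
    exact ENNReal.ofReal_le_ofReal <| Real.rpow_le_one_of_one_le_of_nonpos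
      (le_add_of_nonneg_right (by positivity)) (by norm_num)
  · have hpT : 0 < p.toReal := ENNReal.toReal_pos hp hpi
    have heq : ∀ x : EuclideanSpace ℝ (Fin n),
        (ENNReal.ofReal ((1 + ((‖x‖:ℝ) ^ k) ^ R) ^ (-(1/2):ℝ))) ^ p.toReal
          = ENNReal.ofReal ((1 + ‖x‖ ^ ((k:ℝ) * R)) ^ (-(p.toReal/2))) := fun x => by
      rw [ENNReal.ofReal_rpow_of_pos (by positivity)]
      congr 1
      rw [← Real.rpow_mul (by positivity), ← Real.rpow_natCast ‖x‖ k,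
        ← Real.rpow_mul (norm_nonneg x)]
      ring_nf
    unfold eLp
    rw [if_neg hpi]
    simp_rw [heq]
    refine ENNReal.rpow_lt_top_of_nonneg (by positivity) ?_
    refine (finite_core n ?_ ?_ ?_).ne
    · positivity
    · positivity
    · have := hcond hpi
      calc (n:ℝ) < k * R * p.toReal / 2 := this
        _ = (k:ℝ) * R * (p.toReal / 2) := by ring

set_option maxHeartbeats 2000000 in
/-- The key small-time estimate: with `σ = (n/(2γ))(1/(k p̃) + 1/(ℓ q̃))`, for `N` large
enough the mixed `L^{p̃,q̃}` norm of `(1 + t^N (1+|x|^k+|ξ|^ℓ)^{2γN})^{-1}` is `≤ C t^{-σ}`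
for `0 < t ≤ 1`; in particular, for `N` large enough the `t`-free integral is finite. -/
theorem anharmonic_heat_weight_mixed_norm (k l n : ℕ) (γ : ℝ) (pt qt : ℝ≥0∞)
    (hk : 1 ≤ k) (hl : 1 ≤ l) (hn : 1 ≤ n) (hγ : 0 < γ) (hpt : 0 < pt) (hqt : 0 < qt) :
    (∃ N₀ : ℕ, ∀ N : ℕ, N₀ ≤ N → ∃ C : ℝ, 0 < C ∧
      ∀ t : ℝ, t ∈ Set.Ioc (0 : ℝ) 1 →
        mixedLp n pt qt (fun x ξ =>
            ENNReal.ofReal ((1 + t ^ N * (1 + ‖x‖ ^ k + ‖ξ‖ ^ l) ^ (2 * γ * N))⁻¹)) ≤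
          ENNReal.ofReal
            (C * t ^ (-((n : ℝ) / (2 * γ) * ((1 / pt).toReal / k + (1 / qt).toReal / l))))) ∧
    (∃ N₁ : ℕ, ∀ N : ℕ, N₁ ≤ N →
      mixedLp n pt qt (fun x ξ =>
          ENNReal.ofReal ((1 + (‖x‖ ^ k + ‖ξ‖ ^ l) ^ (2 * γ * N))⁻¹)) < ⊤) := by
  have hk0 : (0:ℝ) < k := by exact_mod_cast hk
  have hl0 : (0:ℝ) < l := by exact_mod_cast hl
  have hk1 : (1:ℝ) ≤ k := by exact_mod_cast hk
  have hl1 : (1:ℝ) ≤ l := by exact_mod_cast hl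
  set a : ℝ := if pt = ∞ then (1:ℝ) else γ * pt.toReal with haa
  set b : ℝ := if qt = ∞ then (1:ℝ) else γ * qt.toReal with hbb
  have ha : 0 < a := by
    rw [haa]; split_ifs with h
    · exact one_pos
    · exact mul_pos hγ (ENNReal.toReal_pos hpt.ne' h)
  have hb : 0 < b := by
    rw [hbb]; split_ifs with h
    · exact one_pos
    · exact mul_pos hγ (ENNReal.toReal_pos hqt.ne' h)
  obtain ⟨N₀, hN₀⟩ := exists_nat_gt (max (max ((n:ℝ)/a) ((n:ℝ)/b)) 1)
  -- common facts for any N ≥ N₀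
  have key : ∀ N : ℕ, N₀ ≤ N → (0 < (N:ℝ)) ∧
      (pt ≠ ∞ → (n:ℝ) < (k:ℝ) * (γ*(N:ℝ)) * pt.toReal) ∧
      (qt ≠ ∞ → (n:ℝ) < (l:ℝ) * (γ*(N:ℝ)) * qt.toReal) := by
    intro N hN
    have hNR : max (max ((n:ℝ)/a) ((n:ℝ)/b)) 1 < (N:ℝ) :=
      lt_of_lt_of_le hN₀ (by exact_mod_cast hN)
    have hN1 : (1:ℝ) < N := lt_of_le_of_lt (le_max_right _ _) hNR
    have hNpos : (0:ℝ) < N := by linarith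
    refine ⟨hNpos, ?_, ?_⟩
    · intro hpi
      have h₁ : (n:ℝ)/a < N :=
        lt_of_le_of_lt (le_trans (le_max_left _ _) (le_max_left _ _)) hNR
      have h₂ : (n:ℝ) < N * a := (div_lt_iff₀ ha).mp h₁
      rw [haa, if_neg hpi] at h₂
      have hpT : (0:ℝ) ≤ pt.toReal := ENNReal.toReal_nonneg
      nlinarith [mul_nonneg (mul_nonneg hγ.le hNpos.le) hpT]
    · intro hpi
      have h₁ : (n:ℝ)/b < N :=
        lt_of_le_of_lt (le_trans (le_max_right _ _) (le_max_left _ _)) hNR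
      have h₂ : (n:ℝ) < N * b := (div_lt_iff₀ hb).mp h₁
      rw [hbb, if_neg hpi] at h₂
      have hpT : (0:ℝ) ≤ qt.toReal := ENNReal.toReal_nonneg
      nlinarith [mul_nonneg (mul_nonneg hγ.le hNpos.le) hpT]
  constructor
  · -- Part 1
    refine ⟨N₀, fun N hN => ?_⟩
    obtain ⟨hNpos, cond1, cond2⟩ := key N hN
    set r : ℝ := γ * N with hrr
    have hr : 0 < r := mul_pos hγ hNpos
    obtain ⟨C₁, hC₁, hB₁⟩ := main1 n k pt hpt.ne' r hr cond1
    obtain ⟨C₂, hC₂, hB₂⟩ := main1 n l qt hqt.ne' r hr cond2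
    refine ⟨2^r * 2^r * C₁ * C₂, by positivity, fun t ht => ?_⟩
    obtain ⟨ht0, ht1⟩ := ht
    set sk : ℝ := t ^ (1/(2*γ*(k:ℝ))) with hskdef
    set sl : ℝ := t ^ (1/(2*γ*(l:ℝ))) with hsldef
    have hsk0 : 0 < sk := Real.rpow_pos_of_pos ht0 _
    have hsl0 : 0 < sl := Real.rpow_pos_of_pos ht0 _
    have hsk1 : sk ≤ 1 := Real.rpow_le_one ht0.le ht1 (by positivity)
    have hsl1 : sl ≤ 1 := Real.rpow_le_one ht0.le ht1 (by positivity)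
    have hskpow : ((sk:ℝ) ^ k) ^ (2*γ*(N:ℝ)) = t ^ N := by
      rw [hskdef, ← Real.rpow_natCast (t ^ (1/(2*γ*(k:ℝ)))) k, ← Real.rpow_mul ht0.le,
        ← Real.rpow_mul ht0.le, ← Real.rpow_natCast t N]
      congr 1
      field_simp
    have hslpow : ((sl:ℝ) ^ l) ^ (2*γ*(N:ℝ)) = t ^ N := by
      rw [hsldef, ← Real.rpow_natCast (t ^ (1/(2*γ*(l:ℝ)))) l, ← Real.rpow_mul ht0.le,
        ← Real.rpow_mul ht0.le, ← Real.rpow_natCast t N]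
      congr 1
      field_simp
    -- pointwise bound
    set c : ℝ≥0∞ := ENNReal.ofReal (2 ^ r) with hcc
    set G : EuclideanSpace ℝ (Fin n) → ℝ≥0∞ :=
      fun x => ENNReal.ofReal ((1 + (sk * ‖x‖) ^ k) ^ (-r)) with hG
    set H : EuclideanSpace ℝ (Fin n) → ℝ≥0∞ :=
      fun ξ => ENNReal.ofReal ((1 + (sl * ‖ξ‖) ^ l) ^ (-r)) with hH
    have hpoint : ∀ (x ξ : EuclideanSpace ℝ (Fin n)),
        ENNReal.ofReal ((1 + t ^ N * (1 + ‖x‖ ^ k + ‖ξ‖ ^ l) ^ (2 * γ * N))⁻¹) ≤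
          (c * G x) * (c * H ξ) := by
      intro x ξ
      have hxk : (0:ℝ) ≤ ‖x‖ ^ k := by positivity
      have hξl : (0:ℝ) ≤ ‖ξ‖ ^ l := by positivity
      have step1 : ((1:ℝ) + t ^ N * (1 + ‖x‖ ^ k + ‖ξ‖ ^ l) ^ (2 * γ * N))⁻¹ ≤
          (1 + t ^ N * (1 + ‖x‖ ^ k) ^ (2*γ*(N:ℝ))) ^ (-(1/2) : ℝ) *
          (1 + t ^ N * (1 + ‖ξ‖ ^ l) ^ (2*γ*(N:ℝ))) ^ (-(1/2) : ℝ) := by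
        exact sep_key (by positivity) (by positivity) (by positivity)
          (by linarith) (by linarith) (by nlinarith) (by positivity) (by positivity)
      have step2 : (1 + t ^ N * (1 + ‖x‖ ^ k) ^ (2*γ*(N:ℝ))) ^ (-(1/2) : ℝ) ≤
          2 ^ ((2*γ*(N:ℝ))/2) * (1 + (sk * ‖x‖) ^ k) ^ (-((2*γ*(N:ℝ))/2)) :=
        factor (norm_nonneg x) hsk0.le (by positivity) (by positivity) hskpow
      have step3 : (1 + t ^ N * (1 + ‖ξ‖ ^ l) ^ (2*γ*(N:ℝ))) ^ (-(1/2) : ℝ) ≤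
          2 ^ ((2*γ*(N:ℝ))/2) * (1 + (sl * ‖ξ‖) ^ l) ^ (-((2*γ*(N:ℝ))/2)) :=
        factor (norm_nonneg ξ) hsl0.le (by positivity) (by positivity) hslpow
      have hexp : (2*γ*(N:ℝ))/2 = r := by rw [hrr]; ring
      rw [hexp] at step2 step3
      have hmul : ((1:ℝ) + t ^ N * (1 + ‖x‖ ^ k + ‖ξ‖ ^ l) ^ (2 * γ * N))⁻¹ ≤
          (2 ^ r * (1 + (sk * ‖x‖) ^ k) ^ (-r)) * (2 ^ r * (1 + (sl * ‖ξ‖) ^ l) ^ (-r)) := by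
        calc ((1:ℝ) + t ^ N * (1 + ‖x‖ ^ k + ‖ξ‖ ^ l) ^ (2 * γ * N))⁻¹ ≤ _ := step1
          _ ≤ _ := mul_le_mul step2 step3 (by positivity) (by positivity)
      calc ENNReal.ofReal ((1 + t ^ N * (1 + ‖x‖ ^ k + ‖ξ‖ ^ l) ^ (2 * γ * N))⁻¹)
          ≤ ENNReal.ofReal ((2 ^ r * (1 + (sk * ‖x‖) ^ k) ^ (-r)) *
              (2 ^ r * (1 + (sl * ‖ξ‖) ^ l) ^ (-r))) := ENNReal.ofReal_le_ofReal hmul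
        _ = (c * G x) * (c * H ξ) := by
            rw [hcc, hG, hH, ENNReal.ofReal_mul (by positivity),
              ENNReal.ofReal_mul (by positivity), ENNReal.ofReal_mul (by positivity)]
    -- inner estimate
    have hGbound := hB₁ sk ⟨hsk0, hsk1⟩
    have hHbound := hB₂ sl ⟨hsl0, hsl1⟩
    set M₁ : ℝ≥0∞ := ENNReal.ofReal C₁ * ENNReal.ofReal (sk ^ (-(n:ℝ) * (1/pt).toReal))
      with hM₁
    set M₂ : ℝ≥0∞ := ENNReal.ofReal C₂ * ENNReal.ofReal (sl ^ (-(n:ℝ) * (1/qt).toReal))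
      with hM₂
    have hcfin : c ≠ ∞ := ENNReal.ofReal_ne_top
    have inner : ∀ ξ : EuclideanSpace ℝ (Fin n),
        eLp pt volume (fun x : EuclideanSpace ℝ (Fin n) => ENNReal.ofReal
            ((1 + t ^ N * (1 + ‖x‖ ^ k + ‖ξ‖ ^ l) ^ (2 * γ * N))⁻¹)) ≤
          (c * c * M₁) * H ξ := by
      intro ξ
      calc eLp pt volume (fun x : EuclideanSpace ℝ (Fin n) => ENNReal.ofReal
            ((1 + t ^ N * (1 + ‖x‖ ^ k + ‖ξ‖ ^ l) ^ (2 * γ * N))⁻¹))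
          ≤ eLp pt volume (fun x => (c * c * H ξ) * G x) := by
            refine eLp_mono fun x => ?_
            calc ENNReal.ofReal ((1 + t ^ N * (1 + ‖x‖ ^ k + ‖ξ‖ ^ l) ^ (2 * γ * N))⁻¹)
                ≤ (c * G x) * (c * H ξ) := hpoint x ξ
              _ = (c * c * H ξ) * G x := by ring
        _ = (c * c * H ξ) * eLp pt volume G := by
            rw [eLp_const_mul hpt.ne' _ (by finiteness) G]
        _ ≤ (c * c * H ξ) * M₁ := mul_le_mul_right hGbound _
        _ = (c * c * M₁) * H ξ := by ring
    -- outer estimate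
    have outer : mixedLp n pt qt (fun x ξ =>
        ENNReal.ofReal ((1 + t ^ N * (1 + ‖x‖ ^ k + ‖ξ‖ ^ l) ^ (2 * γ * N))⁻¹)) ≤
          (c * c * M₁) * M₂ := by
      unfold mixedLp
      calc eLp qt volume (fun ξ : EuclideanSpace ℝ (Fin n) =>
              eLp pt volume (fun x : EuclideanSpace ℝ (Fin n) => ENNReal.ofReal
            ((1 + t ^ N * (1 + ‖x‖ ^ k + ‖ξ‖ ^ l) ^ (2 * γ * N))⁻¹)))
          ≤ eLp qt volume (fun ξ : EuclideanSpace ℝ (Fin n) => (c * c * M₁) * H ξ) :=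
            eLp_mono fun ξ => inner ξ
        _ = (c * c * M₁) * eLp qt volume H := by
            rw [eLp_const_mul hqt.ne' _ (by finiteness) H]
        _ ≤ (c * c * M₁) * M₂ := mul_le_mul_right hHbound _
    refine le_trans outer ?_
    -- identify the constant
    have hst : sk ^ (-(n:ℝ) * (1/pt).toReal) * sl ^ (-(n:ℝ) * (1/qt).toReal) =
        t ^ (-((n : ℝ) / (2 * γ) * ((1 / pt).toReal / k + (1 / qt).toReal / l))) := by
      rw [hskdef, hsldef, ← Real.rpow_mul ht0.le, ← Real.rpow_mul ht0.le,
        ← Real.rpow_add ht0]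
      congr 1
      have hγ' : γ ≠ 0 := hγ.ne'
      have hk' : (k:ℝ) ≠ 0 := hk0.ne'
      have hl' : (l:ℝ) ≠ 0 := hl0.ne'
      field_simp
      ring_nf
    have hfinal : (c * c * M₁) * M₂ = ENNReal.ofReal ((2^r * 2^r * C₁ * C₂) *
        t ^ (-((n : ℝ) / (2 * γ) * ((1 / pt).toReal / k + (1 / qt).toReal / l)))) := by
      rw [← hst, hcc, hM₁, hM₂]
      rw [show (2^r * 2^r * C₁ * C₂) * (sk ^ (-(n:ℝ) * (1/pt).toReal) *
          sl ^ (-(n:ℝ) * (1/qt).toReal)) =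
        (2:ℝ)^r * ((2:ℝ)^r * (C₁ * (sk ^ (-(n:ℝ) * (1/pt).toReal) *
          (C₂ * sl ^ (-(n:ℝ) * (1/qt).toReal))))) from by ring]
      rw [ENNReal.ofReal_mul (by positivity), ENNReal.ofReal_mul (by positivity),
        ENNReal.ofReal_mul hC₁.le, ENNReal.ofReal_mul (by positivity),
        ENNReal.ofReal_mul hC₂.le]
      ring
    rw [hfinal]
  · -- Part 2
    refine ⟨N₀, fun N hN => ?_⟩
    obtain ⟨hNpos, cond1, cond2⟩ := key N hN
    have hRpos : (0:ℝ) < 2 * γ * N := by positivity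
    have cond1' : pt ≠ ∞ → (n:ℝ) < k * (2 * γ * (N:ℝ)) * pt.toReal / 2 := by
      intro hpi
      have h := cond1 hpi
      have e : (k:ℝ) * (2 * γ * (N:ℝ)) * pt.toReal / 2 = k * (γ * N) * pt.toReal := by ring
      rw [e]; exact h
    have cond2' : qt ≠ ∞ → (n:ℝ) < l * (2 * γ * (N:ℝ)) * qt.toReal / 2 := by
      intro hpi
      have h := cond2 hpi
      have e : (l:ℝ) * (2 * γ * (N:ℝ)) * qt.toReal / 2 = l * (γ * N) * qt.toReal := by ring
      rw [e]; exact h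
    have hG := main2 n k pt hpt.ne' (2 * γ * N) hRpos cond1'
    have hH := main2 n l qt hqt.ne' (2 * γ * N) hRpos cond2'
    set G : EuclideanSpace ℝ (Fin n) → ℝ≥0∞ :=
      fun x => ENNReal.ofReal ((1 + ((‖x‖:ℝ) ^ k) ^ (2 * γ * (N:ℝ))) ^ (-(1/2):ℝ)) with hGdef
    set H : EuclideanSpace ℝ (Fin n) → ℝ≥0∞ :=
      fun ξ => ENNReal.ofReal ((1 + ((‖ξ‖:ℝ) ^ l) ^ (2 * γ * (N:ℝ))) ^ (-(1/2):ℝ)) with hHdef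
    have hpoint : ∀ (x ξ : EuclideanSpace ℝ (Fin n)),
        ENNReal.ofReal ((1 + (‖x‖ ^ k + ‖ξ‖ ^ l) ^ (2 * γ * N))⁻¹) ≤ H ξ * G x := by
      intro x ξ
      have hxk : (0:ℝ) ≤ ‖x‖ ^ k := by positivity
      have hξl : (0:ℝ) ≤ ‖ξ‖ ^ l := by positivity
      have h := sep_key (A := ‖x‖ ^ k) (B := ‖ξ‖ ^ l) (W := ‖x‖ ^ k + ‖ξ‖ ^ l)
        (τ := 1) (R := 2 * γ * N) hxk hξl (by positivity)
        (by linarith) (by linarith) (by nlinarith) zero_le_one hRpos.le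
      simp only [one_mul] at h
      calc ENNReal.ofReal ((1 + (‖x‖ ^ k + ‖ξ‖ ^ l) ^ (2 * γ * N))⁻¹)
          ≤ ENNReal.ofReal ((1 + (‖x‖ ^ k) ^ (2 * γ * (N:ℝ))) ^ (-(1/2):ℝ) *
              (1 + (‖ξ‖ ^ l) ^ (2 * γ * (N:ℝ))) ^ (-(1/2):ℝ)) := ENNReal.ofReal_le_ofReal h
        _ = G x * H ξ := by
            rw [hGdef, hHdef, ENNReal.ofReal_mul (by positivity)]
        _ = H ξ * G x := mul_comm _ _
    have inner : ∀ ξ : EuclideanSpace ℝ (Fin n),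
        eLp pt volume (fun x : EuclideanSpace ℝ (Fin n) => ENNReal.ofReal
            ((1 + (‖x‖ ^ k + ‖ξ‖ ^ l) ^ (2 * γ * N))⁻¹)) ≤
          eLp pt volume G * H ξ := by
      intro ξ
      calc eLp pt volume (fun x : EuclideanSpace ℝ (Fin n) => ENNReal.ofReal
            ((1 + (‖x‖ ^ k + ‖ξ‖ ^ l) ^ (2 * γ * N))⁻¹))
          ≤ eLp pt volume (fun x => H ξ * G x) := eLp_mono fun x => hpoint x ξ
        _ = H ξ * eLp pt volume G := eLp_const_mul hpt.ne' _ ENNReal.ofReal_ne_top G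
        _ = eLp pt volume G * H ξ := mul_comm _ _
    calc mixedLp n pt qt (fun x ξ =>
          ENNReal.ofReal ((1 + (‖x‖ ^ k + ‖ξ‖ ^ l) ^ (2 * γ * N))⁻¹))
        ≤ eLp qt volume (fun ξ => eLp pt volume G * H ξ) := by
          unfold mixedLp
          exact eLp_mono fun ξ => inner ξ
      _ = eLp pt volume G * eLp qt volume H := eLp_const_mul hqt.ne' _ hG.ne H
      _ < ⊤ := ENNReal.mul_lt_top hG hH
end
end

section
/- Let a > 0, σ ∈ (0,1) and let β ≥ 1 be a natural number. Define c : (0,∞) → ℝ by c(τ) = τ^{−σ} for 0 < τ ≤ 1 and c(τ) = e^{−aτ} for τ > 1. Then there exists a constant C > 0 such that for every t > 0: e^{a t} ∫_0^t c(t − s) e^{−(2β+1) a s} ds ≤ C. -/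
open MeasureTheory intervalIntegral Set

/-- Integrability of the truncated power singularity. -/
lemma phi_intervalIntegrable (σ : ℝ) (_hσ₀ : 0 < σ) (hσ₁ : σ < 1) (t : ℝ) (ht : 0 < t) :
    IntervalIntegrable (fun u : ℝ => if u ≤ 1 then u ^ (-σ) else 0) volume 0 t := by
  have hr : (-1 : ℝ) < -σ := by linarith
  have hrp : ∀ b : ℝ, 0 < b → b ≤ 1 →
      IntegrableOn (fun u : ℝ => if u ≤ 1 then u ^ (-σ) else 0) (Ioc 0 b) volume := by
    intro b hb hb1
    have h0 : IntegrableOn (fun u : ℝ => u ^ (-σ)) (Ioc 0 b) volume := by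
      rw [← intervalIntegrable_iff_integrableOn_Ioc_of_le hb.le]
      exact intervalIntegrable_rpow' hr
    exact h0.congr_fun (fun x hx => (if_pos (hx.2.trans hb1)).symm) measurableSet_Ioc
  rw [intervalIntegrable_iff_integrableOn_Ioc_of_le ht.le]
  rcases le_or_gt t 1 with h1 | h1
  · exact hrp t ht h1
  · rw [← Set.Ioc_union_Ioc_eq_Ioc (le_of_lt one_pos) h1.le]
    refine (hrp 1 one_pos le_rfl).union ?_
    have h0 : IntegrableOn (fun _ : ℝ => (0 : ℝ)) (Ioc 1 t) volume := integrableOn_zero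
    exact h0.congr_fun (fun x hx => (if_neg (not_le.mpr hx.1)).symm) measurableSet_Ioc

/-- Bound for the integral of the truncated power singularity. -/
lemma phi_integral_le (σ : ℝ) (hσ₀ : 0 < σ) (hσ₁ : σ < 1) (t : ℝ) (ht : 0 < t) :
    ∫ u in (0 : ℝ)..t, (if u ≤ 1 then u ^ (-σ) else 0) ≤ 1 / (1 - σ) := by
  have hr : (-1 : ℝ) < -σ := by linarith
  have h1σ : (0 : ℝ) < 1 - σ := by linarith
  have hsmall : ∀ b : ℝ, 0 < b → b ≤ 1 →
      (∫ u in (0 : ℝ)..b, (if u ≤ 1 then u ^ (-σ) else 0)) ≤ 1 / (1 - σ) := by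
    intro b hb hb1
    have heq : (∫ u in (0 : ℝ)..b, (if u ≤ 1 then u ^ (-σ) else 0))
        = ∫ u in (0 : ℝ)..b, u ^ (-σ) := by
      apply intervalIntegral.integral_congr
      intro x hx
      rw [uIcc_of_le hb.le] at hx
      exact if_pos (hx.2.trans hb1)
    rw [heq, integral_rpow (Or.inl hr)]
    rw [Real.zero_rpow (by linarith : -σ + 1 ≠ 0), sub_zero]
    rw [show -σ + 1 = 1 - σ by ring]
    gcongr
    exact Real.rpow_le_one hb.le hb1 h1σ.le
  rcases le_or_gt t 1 with h1 | h1
  · exact hsmall t ht h1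
  · have h01 := phi_intervalIntegrable σ hσ₀ hσ₁ 1 one_pos
    have h1t : IntervalIntegrable (fun u : ℝ => if u ≤ 1 then u ^ (-σ) else 0) volume 1 t := by
      refine (_root_.intervalIntegrable_const (c := (0 : ℝ))).congr ?_
      rw [Set.uIoc_of_le h1.le]
      intro x hx
      exact (if_neg (not_le.mpr hx.1)).symm
    rw [← intervalIntegral.integral_add_adjacent_intervals h01 h1t]
    have hzero : (∫ u in (1 : ℝ)..t, (if u ≤ 1 then u ^ (-σ) else 0)) = 0 := by
      rw [intervalIntegral.integral_congr_ae (g := fun _ => (0 : ℝ)) ?_,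
        intervalIntegral.integral_zero]
      refine Filter.Eventually.of_forall fun x hx => ?_
      rw [Set.uIoc_of_le h1.le] at hx
      exact if_neg (not_le.mpr hx.1)
    rw [hzero, add_zero]
    exact hsmall 1 one_pos le_rfl

/-- **Duhamel time-integral estimate.** Let `a > 0`, `σ ∈ (0,1)`, `β ≥ 1`, and define
`c(τ) = τ^{-σ}` for `0 < τ ≤ 1` and `c(τ) = e^{-aτ}` for `τ > 1`. Then there is `C > 0`
such that for every `t > 0`: `e^{at} ∫₀ᵗ c(t-s) e^{-(2β+1) a s} ds ≤ C`. -/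
theorem duhamel_time_integral_estimate (a σ : ℝ) (ha : 0 < a) (hσ₀ : 0 < σ) (hσ₁ : σ < 1)
    (β : ℕ) (hβ : 1 ≤ β) :
    ∃ C : ℝ, 0 < C ∧ ∀ t : ℝ, 0 < t →
      Real.exp (a * t) *
          ∫ s in (0 : ℝ)..t,
            (if t - s ≤ 1 then (t - s) ^ (-σ) else Real.exp (-a * (t - s))) *
              Real.exp (-((2 * β + 1 : ℝ)) * a * s) ≤ C := by
  have h1σ : (0 : ℝ) < 1 - σ := by linarith
  have hβ1 : (1 : ℝ) ≤ (β : ℝ) := by exact_mod_cast hβ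
  set k : ℝ := (2 * (β : ℝ) + 1) * a with hk
  set b : ℝ := 2 * (β : ℝ) * a with hb
  have hk0 : 0 < k := by rw [hk]; nlinarith
  have hb0 : 0 < b := by rw [hb]; nlinarith
  have hkb : k - a = b := by rw [hk, hb]; ring
  refine ⟨Real.exp k / (1 - σ) + 1 / b, by positivity, fun t ht => ?_⟩
  -- rewrite the integrand as a function of `t - s`
  have hrw : (fun s => (if t - s ≤ 1 then (t - s) ^ (-σ) else Real.exp (-a * (t - s))) *
        Real.exp (-((2 * (β : ℕ) + 1 : ℝ)) * a * s))
      = fun s => (fun u => Real.exp (-k * t) *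
          ((if u ≤ 1 then u ^ (-σ) else Real.exp (-a * u)) * Real.exp (k * u))) (t - s) := by
    have hexp2 : ∀ s : ℝ, Real.exp (-((2 * (β : ℝ) + 1)) * a * s)
        = Real.exp (k * (t - s)) * Real.exp (-k * t) := by
      intro s
      rw [← Real.exp_add]
      congr 1
      rw [hk]; ring
    funext s
    simp only
    rw [hexp2 s]
    ring
  rw [hrw, intervalIntegral.integral_comp_sub_left (fun u => Real.exp (-k * t) *
      ((if u ≤ 1 then u ^ (-σ) else Real.exp (-a * u)) * Real.exp (k * u))) t,
    sub_self, sub_zero, intervalIntegral.integral_const_mul]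
  -- now bound the integral
  set f : ℝ → ℝ := fun u => (if u ≤ 1 then u ^ (-σ) else Real.exp (-a * u)) * Real.exp (k * u)
    with hf
  set g : ℝ → ℝ := fun u => Real.exp k * (if u ≤ 1 then u ^ (-σ) else 0) + Real.exp (b * u)
    with hg
  have hfg : ∀ u ∈ Set.Icc (0 : ℝ) t, f u ≤ g u := by
    intro u hu
    rw [hf, hg]
    simp only
    rcases le_or_gt u 1 with h1 | h1
    · rw [if_pos h1, if_pos h1]
      have h2 : u ^ (-σ) * Real.exp (k * u) ≤ u ^ (-σ) * Real.exp k := by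
        have : Real.exp (k * u) ≤ Real.exp k := by
          apply Real.exp_le_exp.mpr
          nlinarith [hu.1]
        have hpos : (0 : ℝ) ≤ u ^ (-σ) := Real.rpow_nonneg hu.1 _
        nlinarith
      have := Real.exp_pos (b * u)
      nlinarith
    · rw [if_neg (not_le.mpr h1), if_neg (not_le.mpr h1)]
      rw [← Real.exp_add]
      have : -a * u + k * u = b * u := by rw [← hkb]; ring
      rw [this]
      have := Real.exp_pos k
      have := Real.rpow_nonneg (le_trans zero_le_one h1.le) (-σ)
      nlinarith [Real.exp_pos k, Real.rpow_nonneg (le_trans zero_le_one h1.le) (-σ)]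
  have hint1 : IntervalIntegrable (fun u : ℝ => Real.exp k * (if u ≤ 1 then u ^ (-σ) else 0))
      volume 0 t := (phi_intervalIntegrable σ hσ₀ hσ₁ t ht).const_mul _
  have hint2 : IntervalIntegrable (fun u : ℝ => Real.exp (b * u)) volume 0 t := by
    apply Continuous.intervalIntegrable
    fun_prop
  have hgint : IntervalIntegrable g volume 0 t := by
    rw [hg]
    exact hint1.add hint2
  have hmain : (∫ u in (0 : ℝ)..t, f u) ≤ ∫ u in (0 : ℝ)..t, g u := by
    by_cases hfint : IntervalIntegrable f volume 0 t
    · exact intervalIntegral.integral_mono_on ht.le hfint hgint hfg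
    · rw [intervalIntegral.integral_undef hfint]
      apply intervalIntegral.integral_nonneg ht.le
      intro u hu
      have h1 : (0 : ℝ) ≤ Real.exp k * (if u ≤ 1 then u ^ (-σ) else 0) := by
        rcases le_or_gt u 1 with h | h
        · rw [if_pos h]
          exact mul_nonneg (Real.exp_pos k).le (Real.rpow_nonneg hu.1 _)
        · rw [if_neg (not_le.mpr h)]; simp
      have h2 := (Real.exp_pos (b * u)).le
      rw [hg]
      exact add_nonneg h1 h2
  have hgval : (∫ u in (0 : ℝ)..t, g u)
      ≤ Real.exp k * (1 / (1 - σ)) + Real.exp (b * t) / b := by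
    simp only [hg]
    rw [intervalIntegral.integral_add hint1 hint2, intervalIntegral.integral_const_mul]
    have h1 : (∫ u in (0 : ℝ)..t, Real.exp (b * u)) = (Real.exp (b * t) - 1) / b := by
      rw [intervalIntegral.integral_comp_mul_left (fun x => Real.exp x) hb0.ne']
      rw [integral_exp, mul_zero, Real.exp_zero, smul_eq_mul]
      field_simp
    rw [h1]
    have h2 := phi_integral_le σ hσ₀ hσ₁ t ht
    have h3 : (Real.exp (b * t) - 1) / b ≤ Real.exp (b * t) / b := by
      gcongr
      linarith
    have h4 : Real.exp k * (∫ u in (0 : ℝ)..t, (if u ≤ 1 then u ^ (-σ) else 0))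
        ≤ Real.exp k * (1 / (1 - σ)) := by
      apply mul_le_mul_of_nonneg_left h2 (Real.exp_pos k).le
    linarith
  -- put everything together
  have hexp : Real.exp (a * t) * Real.exp (-k * t) = Real.exp (-(b * t)) := by
    rw [← Real.exp_add]
    congr 1
    rw [← hkb]; ring
  calc Real.exp (a * t) * (Real.exp (-k * t) * ∫ u in (0 : ℝ)..t, f u)
      = Real.exp (-(b * t)) * ∫ u in (0 : ℝ)..t, f u := by rw [← mul_assoc, hexp]
    _ ≤ Real.exp (-(b * t)) * (Real.exp k * (1 / (1 - σ)) + Real.exp (b * t) / b) := by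
        apply mul_le_mul_of_nonneg_left (le_trans hmain hgval) (Real.exp_pos _).le
    _ ≤ Real.exp k / (1 - σ) + 1 / b := by
        have he1 : Real.exp (-(b * t)) ≤ 1 := by
          apply Real.exp_le_one_iff.mpr
          nlinarith
        have he2 : Real.exp (-(b * t)) * Real.exp (b * t) = 1 := by
          rw [← Real.exp_add]; simp
        have hA : 0 < Real.exp k * (1 / (1 - σ)) := by positivity
        have h5 : Real.exp (-(b * t)) * (Real.exp k * (1 / (1 - σ)))
            ≤ Real.exp k * (1 / (1 - σ)) := by
          nlinarith [Real.exp_pos (-(b * t))]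
        have h6 : Real.exp (-(b * t)) * (Real.exp (b * t) / b) = 1 / b := by
          rw [← mul_div_assoc, he2]
        rw [mul_add, h6]
        have : Real.exp k * (1 / (1 - σ)) = Real.exp k / (1 - σ) := by ring
        linarith
end
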